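/- arXiv:2206.12726 — 10 statements merged into one kernel-verified Lean document; each statement's English description precedes it below -/
import Mathlib

section
/- If f ∈ C(ℤₚ, ℂₚ) has Mahler expansion f = Σₙ bₙ βₙ (with bₙ → 0), then S(f) = Σₙ (bₙ − n·bₙ₋₁) βₙ, where b₋₁ := 0. -/
open Filter Finset

/-- The canonical embedding `ℤ_[p] → K` (where `K` plays the role of `ℂ_p`,
a complete nontrivially normed field extension of `ℚ_[p]`). -/
noncomputable def pc (p : ℕ) [Fact p.Prime] (K : Type*) [NontriviallyNormedField K]
    [NormedAlgebra ℚ_[p] K] (x : ℤ_[p]) : K :=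
  algebraMap ℚ_[p] K x

/-- The operator `S` : `S(f)(x) = f(x) - x·f(x-1)`. -/
noncomputable def Sop (p : ℕ) [Fact p.Prime] (K : Type*) [NontriviallyNormedField K]
    [NormedAlgebra ℚ_[p] K] (f : ℤ_[p] → K) : ℤ_[p] → K :=
  fun x => f x - pc p K x * f (x - 1)

/-- The Mahler basis function `βₙ(x) = C(x,n) = x(x-1)⋯(x-n+1)/n!`, valued in `K`. -/
noncomputable def bK (p : ℕ) [Fact p.Prime] (K : Type*) [NontriviallyNormedField K]
    [NormedAlgebra ℚ_[p] K] (n : ℕ) (x : ℤ_[p]) : K :=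
  (∏ i ∈ Finset.range n, (pc p K x - (i : K))) / (n.factorial : K)

lemma bK_norm_le (p : ℕ) [Fact p.Prime] (K : Type*) [NontriviallyNormedField K]
    [NormedAlgebra ℚ_[p] K] (n : ℕ) (x : ℤ_[p]) : ‖bK p K n x‖ ≤ 1 := by
  have h3 : (∏ i ∈ Finset.range n, (x - (i : ℤ_[p]))) = (descPochhammer ℤ_[p] n).eval x := by
    induction n with
    | zero => simp
    | succ n ih => rw [Finset.prod_range_succ, ih, descPochhammer_succ_eval]
  have h1 : bK p K n x = algebraMap ℚ_[p] K
      ((∏ i ∈ Finset.range n, ((x : ℚ_[p]) - (i : ℚ_[p]))) / (n.factorial : ℚ_[p])) := by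
    rw [map_div₀, map_prod]
    simp [bK, pc]
  have h2 : (∏ i ∈ Finset.range n, ((x : ℚ_[p]) - (i : ℚ_[p])))
      = (((descPochhammer ℤ_[p] n).eval x : ℤ_[p]) : ℚ_[p]) := by
    rw [← h3]
    clear h3 h1
    induction n with
    | zero => simp
    | succ m ih =>
      rw [Finset.prod_range_succ, Finset.prod_range_succ, PadicInt.coe_mul, ih]
      push_cast
      ring
  have h4 : ‖(descPochhammer ℤ_[p] n).eval x‖ ≤ ‖(n.factorial : ℤ_[p])‖ := by
    rw [descPochhammer_eval_eq_ascPochhammer]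
    exact PadicInt.norm_ascPochhammer_le n _
  have hfac : ((n.factorial : ℤ_[p]) : ℚ_[p]) = (n.factorial : ℚ_[p]) := by push_cast; rfl
  have hfacpos : (0 : ℝ) < ‖(n.factorial : ℚ_[p])‖ :=
    norm_pos_iff.mpr (Nat.cast_ne_zero.mpr n.factorial_ne_zero)
  rw [h1, norm_algebraMap', norm_div, h2, div_le_one hfacpos, ← hfac,
    PadicInt.padic_norm_e_of_padicInt, PadicInt.padic_norm_e_of_padicInt]
  exact h4

lemma bK_key_id (p : ℕ) [Fact p.Prime] (K : Type*) [NontriviallyNormedField K]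
    [NormedAlgebra ℚ_[p] K] (n : ℕ) (x : ℤ_[p]) :
    pc p K x * bK p K n (x - 1) = ((n : K) + 1) * bK p K (n + 1) x := by
  haveI : CharZero K := charZero_of_injective_algebraMap (algebraMap ℚ_[p] K).injective
  have hpc : pc p K (x - 1) = pc p K x - 1 := by
    have h : ((x - 1 : ℤ_[p]) : ℚ_[p]) = (x : ℚ_[p]) - 1 := by push_cast; ring
    simp only [pc, h, map_sub, map_one]
  have hprod : ∏ i ∈ Finset.range (n + 1), (pc p K x - (i : K))
      = (∏ i ∈ Finset.range n, (pc p K x - 1 - (i : K))) * pc p K x := by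
    rw [Finset.prod_range_succ']
    congr 1
    · exact Finset.prod_congr rfl fun i _ => by push_cast; ring
    · simp
  rw [bK, bK, hpc, hprod]
  have h1 : ((n + 1).factorial : K) = ((n : K) + 1) * (n.factorial : K) := by
    rw [Nat.factorial_succ]; push_cast; ring
  have h2 : ((n : K) + 1) ≠ 0 := by
    have := Nat.cast_ne_zero (R := K).mpr (Nat.succ_ne_zero n)
    push_cast at this; exact this
  have h3 : (n.factorial : K) ≠ 0 := Nat.cast_ne_zero.mpr n.factorial_ne_zero
  rw [h1]
  field_simp

/-- If a continuous `f : ℤ_[p] → K` has Mahler expansion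
`f = Σₙ bₙ βₙ` (with `bₙ → 0`), then `S f = Σₙ (bₙ - n·bₙ₋₁) βₙ`, with `b₋₁ := 0`. -/
theorem stmt_2 (p : ℕ) [Fact p.Prime] (K : Type*) [NontriviallyNormedField K]
    [NormedAlgebra ℚ_[p] K] [CompleteSpace K]
    (f : ℤ_[p] → K) (hf : Continuous f) (b : ℕ → K)
    (hb : Tendsto b atTop (nhds 0))
    (hmahler : ∀ x, f x = ∑' n : ℕ, b n * bK p K n x) :
    ∀ x, Sop p K f x =
      ∑' n : ℕ, (b n - (n : K) * (if n = 0 then 0 else b (n - 1))) * bK p K n x := by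
  haveI : IsUltrametricDist K := IsUltrametricDist.of_normedAlgebra ℚ_[p]
  intro x
  -- summability of the Mahler series at any point
  have hsum : ∀ y : ℤ_[p], Summable (fun n => b n * bK p K n y) := by
    intro y
    apply NonarchimedeanAddGroup.summable_of_tendsto_cofinite_zero
    rw [Nat.cofinite_eq_atTop]
    refine squeeze_zero_norm (fun n => ?_) (by simpa using hb.norm)
    rw [norm_mul]
    exact mul_le_of_le_one_right (norm_nonneg _) (bK_norm_le p K n y)
  have hA : HasSum (fun n => b n * bK p K n x) (f x) := by
    rw [hmahler x]; exact (hsum x).hasSum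
  have hB : HasSum (fun n => b n * bK p K n (x - 1)) (f (x - 1)) := by
    rw [hmahler (x - 1)]; exact (hsum (x - 1)).hasSum
  have hC : HasSum (fun n => pc p K x * (b n * bK p K n (x - 1)))
      (pc p K x * f (x - 1)) := hB.mul_left _
  set D : ℕ → K := fun n => (n : K) * (if n = 0 then 0 else b (n - 1)) * bK p K n x with hD
  have hCD : ∀ n, pc p K x * (b n * bK p K n (x - 1)) = D (n + 1) := by
    intro n
    simp only [hD, Nat.succ_ne_zero, if_false, Nat.add_sub_cancel]
    rw [mul_left_comm, bK_key_id]
    push_cast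
    ring
  have hC' : HasSum (fun n => D (n + 1)) (pc p K x * f (x - 1)) := by
    simpa only [hCD] using hC
  have hDsum : HasSum D (pc p K x * f (x - 1)) := by
    have h0 := (hasSum_nat_add_iff (f := D) 1).mp hC'
    simpa [hD] using h0
  have hterm : ∀ n, (b n - (n : K) * (if n = 0 then 0 else b (n - 1))) * bK p K n x
      = b n * bK p K n x - D n := by
    intro n
    simp only [hD]
    ring
  calc Sop p K f x = f x - pc p K x * f (x - 1) := rfl
    _ = ∑' n, (b n * bK p K n x - D n) := (hA.sub hDsum).tsum_eq.symm
    _ = ∑' n, (b n - (n : K) * (if n = 0 then 0 else b (n - 1))) * bK p K n x :=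
        tsum_congr fun n => (hterm n).symm
end

section
/- The operator S defined by S(f)(x) = f(x) − x·f(x−1) is a bijective ℂₚ-linear automorphism of C(ℤₚ, ℂₚ). Moreover, if g = Σₖ bₖ βₖ, then S⁻¹(g) = Σₙ (Σ_{k=0}^n (n!/k!) bₖ) βₙ. -/
/-! Since `x · βₙ(x - 1) = (n + 1) · βₙ₊₁(x)`, the operator acts on Mahler coefficients by
`S (∑ cₙ βₙ) = ∑ (cₙ - n cₙ₋₁) βₙ`. The triangular system `cₙ - n cₙ₋₁ = bₙ` is solved by
`cₙ = ∑_{k ≤ n} (n!/k!) bₖ`, and `cₙ → 0` when `bₙ → 0` because `|n!| → 0` and the norm is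
ultrametric; with Mahler's theorem this gives surjectivity. Injectivity holds because `S f`
determines `f` on `ℕ` recursively (`S f 0 = f 0`, `S f (n + 1) = f (n + 1) - (n + 1) f n`),
and `ℕ` is dense in `ℤ_[p]`. -/

open Filter Finset

open Topology Polynomial
open scoped Nat

lemma RingHom.map_descPochhammer_smeval {S T : Type*} [CommRing S] [CommRing T] (f : S →+* T)
    (y : S) (n : ℕ) : f ((descPochhammer ℤ n).smeval y) = (descPochhammer T n).eval (f y) := by
  rw [← aeval_eq_smeval, ← descPochhammer_map (Int.castRingHom T), eval_map]
  exact (aeval_algHom_apply f.toIntAlgHom y _).symm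

lemma pow_div_dvd_factorial (p : ℕ) [Fact p.Prime] (n : ℕ) : p ^ (n / p) ∣ n ! := by
  have hmul : p ^ (n / p) ∣ (p * (n / p))! :=
    (pow_dvd_pow p (by rw [padicValNat_factorial_mul]; omega)).trans pow_padicValNat_dvd
  exact hmul.trans (Nat.factorial_dvd_factorial (Nat.mul_div_le n p))

lemma tendsto_sum_range_mul_of_tendsto_zero {R : Type*} [NormedRing R] [IsUltrametricDist R]
    {a : ℕ → ℕ → R} {b : ℕ → R} (ha : ∀ n k, ‖a n k‖ ≤ 1)
    (ha₀ : ∀ k, Tendsto (a · k) atTop (𝓝 0)) (hb : Tendsto b atTop (𝓝 0)) :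
    Tendsto (fun n => ∑ k ∈ range (n + 1), a n k * b k) atTop (𝓝 0) := by
  rw [NormedAddGroup.tendsto_nhds_zero] at hb ⊢
  intro ε hε
  obtain ⟨N, hN⟩ := (hb ε hε).exists_forall_of_atTop
  have hhead : ∀ᶠ n in atTop, ∀ k ∈ range N, ‖a n k * b k‖ < ε :=
    (eventually_all_finset _).2 fun k _ =>
      NormedAddGroup.tendsto_nhds_zero.1 (by simpa using (ha₀ k).mul_const (b k)) ε hε
  filter_upwards [hhead] with n hn
  refine (nonempty_range_add_one.norm_sum_le_sup'_norm _).trans_lt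
    ((Finset.sup'_lt_iff _).2 fun k _ => ?_)
  by_cases hk : k < N
  · exact hn k (mem_range.2 hk)
  · calc ‖a n k * b k‖ ≤ ‖a n k‖ * ‖b k‖ := norm_mul_le _ _
      _ ≤ ‖b k‖ := mul_le_of_le_one_left (norm_nonneg _) (ha n k)
      _ < ε := hN k (not_lt.1 hk)

def sopInvMahlerCoeff {R : Type*} [Semiring R] (b : ℕ → R) (n : ℕ) : R :=
  ∑ k ∈ range (n + 1), ((n ! / k ! : ℕ) : R) * b k

section sopInvMahlerCoeff

variable {R : Type*} [Ring R] (b : ℕ → R)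

lemma sopInvMahlerCoeff_zero : sopInvMahlerCoeff b 0 = b 0 := by
  simp [sopInvMahlerCoeff]

lemma sopInvMahlerCoeff_succ (n : ℕ) :
    sopInvMahlerCoeff b (n + 1) = (n + 1) * sopInvMahlerCoeff b n + b (n + 1) := by
  rw [sopInvMahlerCoeff, sum_range_succ, Nat.div_self (Nat.factorial_pos _), Nat.cast_one,
    one_mul, sopInvMahlerCoeff, mul_sum]
  congr 1
  refine sum_congr rfl fun k hk => ?_
  rw [Nat.factorial_succ, Nat.mul_div_assoc _ (Nat.factorial_dvd_factorial
    (Nat.lt_succ_iff.1 (mem_range.1 hk))), Nat.cast_mul, Nat.cast_succ, mul_assoc]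

lemma sopInvMahlerCoeff_sub_mul_pred (n : ℕ) :
    sopInvMahlerCoeff b n - n * sopInvMahlerCoeff b (n - 1) = b n := by
  cases n with
  | zero => simp [sopInvMahlerCoeff_zero]
  | succ n => rw [sopInvMahlerCoeff_succ, Nat.add_sub_cancel, Nat.cast_succ, add_sub_cancel_left]

end sopInvMahlerCoeff

lemma charZero_of_padicAlgebra (p : ℕ) [Fact p.Prime] {K : Type*}
    [NontriviallyNormedField K] [NormedAlgebra ℚ_[p] K] : CharZero K :=
  charZero_of_injective_algebraMap (algebraMap ℚ_[p] K).injective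

lemma norm_natCast_le_one_of_padicAlgebra (p : ℕ) [Fact p.Prime] {K : Type*}
    [NontriviallyNormedField K] [NormedAlgebra ℚ_[p] K] (n : ℕ) : ‖(n : K)‖ ≤ 1 := by
  rw [← map_natCast (algebraMap ℚ_[p] K), norm_algebraMap']
  exact_mod_cast Padic.norm_int_le_one (p := p) n

lemma isUltrametricDist_of_padicAlgebra (p : ℕ) [Fact p.Prime] {K : Type*}
    [NontriviallyNormedField K] [NormedAlgebra ℚ_[p] K] : IsUltrametricDist K :=
  IsUltrametricDist.isUltrametricDist_of_forall_norm_natCast_le_one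
    (norm_natCast_le_one_of_padicAlgebra p)

lemma tendsto_norm_factorial_of_padicAlgebra (p : ℕ) [Fact p.Prime] {K : Type*}
    [NontriviallyNormedField K] [NormedAlgebra ℚ_[p] K] :
    Tendsto (fun n : ℕ => ‖(n ! : K)‖) atTop (𝓝 0) := by
  have hbound (n : ℕ) : ‖(n ! : K)‖ ≤ (p : ℝ)⁻¹ ^ (n / p) := by
    obtain ⟨t, ht⟩ := pow_div_dvd_factorial p n
    rw [← map_natCast (algebraMap ℚ_[p] K), norm_algebraMap', ht, Nat.cast_mul, norm_mul,
      Nat.cast_pow, norm_pow, Padic.norm_p]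
    exact mul_le_of_le_one_right (by positivity) (mod_cast Padic.norm_int_le_one (p := p) t)
  have hp : (p : ℝ)⁻¹ < 1 := inv_lt_one_of_one_lt₀ (mod_cast (Fact.out : p.Prime).one_lt)
  refine squeeze_zero (fun n => norm_nonneg _) hbound
    ((tendsto_pow_atTop_nhds_zero_of_lt_one (by positivity) hp).comp ?_)
  exact Nat.tendsto_div_const_atTop (Fact.out : p.Prime).ne_zero

lemma tendsto_sopInvMahlerCoeff (p : ℕ) [Fact p.Prime] {K : Type*}
    [NontriviallyNormedField K] [NormedAlgebra ℚ_[p] K] {b : ℕ → K} (hb : Tendsto b atTop (𝓝 0)) :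
    Tendsto (sopInvMahlerCoeff b) atTop (𝓝 0) := by
  have := isUltrametricDist_of_padicAlgebra p (K := K)
  have := charZero_of_padicAlgebra p (K := K)
  refine tendsto_sum_range_mul_of_tendsto_zero
    (fun n k => norm_natCast_le_one_of_padicAlgebra p _) (fun k => ?_) hb
  have hlim : Tendsto (fun n => (n ! : K) / k !) atTop (𝓝 0) := by
    simpa using (tendsto_zero_iff_norm_tendsto_zero.2
      (tendsto_norm_factorial_of_padicAlgebra p)).div_const (k ! : K)
  refine hlim.congr' ((eventually_ge_atTop k).mono fun n hn => ?_)
  exact (Nat.cast_div (Nat.factorial_dvd_factorial hn) (mod_cast k.factorial_ne_zero)).symm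

section PadicAlgebra

variable {p : ℕ} [Fact p.Prime] {K : Type*} [NontriviallyNormedField K] [NormedAlgebra ℚ_[p] K]

lemma bK_eq_eval_descPochhammer (n : ℕ) (x : ℤ_[p]) :
    bK p K n x = (descPochhammer K n).eval (pc p K x) / n ! := by
  rw [bK, descPochhammer_eval_eq_prod_range]

lemma bK_eq_algebraMap_mahler (n : ℕ) (x : ℤ_[p]) :
    bK p K n x = algebraMap ℚ_[p] K (mahler n x) := by
  have := charZero_of_padicAlgebra p (K := K)
  have h := congrArg ((algebraMap ℚ_[p] K).comp PadicInt.Coe.ringHom)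
    (Ring.descPochhammer_eq_factorial_smul_choose x n)
  rw [RingHom.map_descPochhammer_smeval, map_nsmul, nsmul_eq_mul] at h
  rw [bK_eq_eval_descPochhammer, div_eq_iff (mod_cast n.factorial_ne_zero), mul_comm]
  exact h

lemma pc_mul_bK_sub_one (n : ℕ) (x : ℤ_[p]) :
    pc p K x * bK p K n (x - 1) = (n + 1) * bK p K (n + 1) x := by
  have := charZero_of_padicAlgebra p (K := K)
  have hpc : pc p K (x - 1) = pc p K x - 1 := by simp [pc]
  rw [bK_eq_eval_descPochhammer, bK_eq_eval_descPochhammer, hpc, descPochhammer_succ_left,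
    eval_mul, eval_X, eval_comp, eval_sub, eval_X, eval_one, Nat.factorial_succ, Nat.cast_mul]
  field_simp
  push_cast
  ring

lemma eq_of_Sop_eq {f g : ℤ_[p] → K} (hf : Continuous f) (hg : Continuous g)
    (h : Sop p K f = Sop p K g) : f = g := by
  refine PadicInt.denseRange_natCast.equalizer hf hg (funext fun n => ?_)
  induction n with
  | zero => simpa [Sop, pc] using congrFun h 0
  | succ n ih =>
    have hn := congrFun h (n + 1 : ℕ)
    simp only [Sop, Function.comp_apply, Nat.cast_succ, add_sub_cancel_right] at hn ih ⊢
    rwa [ih, sub_left_inj] at hn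

lemma hasSum_Sop {c : ℕ → K} {F : ℤ_[p] → K}
    (hF : ∀ y, HasSum (fun n => c n * bK p K n y) (F y)) (x : ℤ_[p]) :
    HasSum (fun n : ℕ => (c n - n * c (n - 1)) * bK p K n x) (Sop p K F x) := by
  have hshift :
      HasSum (fun n : ℕ => (n : K) * c (n - 1) * bK p K n x) (pc p K x * F (x - 1)) := by
    rw [← hasSum_nat_add_iff' 1]
    simpa [pc_mul_bK_sub_one, mul_assoc, mul_left_comm] using (hF (x - 1)).mul_left (pc p K x)
  simp only [Sop, sub_mul]
  exact (hF x).sub hshift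

section Mahler

-- Not a global instance: for `K = ℚ_[p]` it would clash with the existing `ℤ_[p]`-algebra.
variable (p K) in
noncomputable abbrev padicIntAlgebra : Algebra ℤ_[p] K :=
  ((algebraMap ℚ_[p] K).comp PadicInt.Coe.ringHom).toAlgebra

attribute [local instance] padicIntAlgebra

lemma isBoundedSMul_padicInt : IsBoundedSMul ℤ_[p] K :=
  IsBoundedSMul.of_norm_smul_le fun r x => by
    change ‖algebraMap ℚ_[p] K r * x‖ ≤ ‖r‖ * ‖x‖
    rw [norm_mul, norm_algebraMap', PadicInt.padic_norm_e_of_padicInt]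

attribute [local instance] isBoundedSMul_padicInt

lemma mahler_smul_eq_mul_bK (a : K) (n : ℕ) (x : ℤ_[p]) : mahler n x • a = a * bK p K n x := by
  rw [Algebra.smul_def, bK_eq_algebraMap_mahler, mul_comm]
  rfl

lemma hasSum_mul_bK_of_hasSum_mahlerTerm {a : ℕ → K} {F : C(ℤ_[p], K)}
    (h : HasSum (fun n => PadicInt.mahlerTerm (a n) n) F) (x : ℤ_[p]) :
    HasSum (fun n => a n * bK p K n x) (F x) := by
  simpa [PadicInt.mahlerTerm_apply, mahler_smul_eq_mul_bK] using
    h.mapL (ContinuousMap.evalCLM ℚ_[p] x)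

variable [CompleteSpace K]

variable (p) in
lemma exists_continuous_hasSum_mul_bK {c : ℕ → K} (hc : Tendsto c atTop (𝓝 0)) :
    ∃ F : C(ℤ_[p], K), ∀ x, HasSum (fun n => c n * bK p K n x) (F x) :=
  have := isUltrametricDist_of_padicAlgebra p (K := K)
  ⟨_, hasSum_mul_bK_of_hasSum_mahlerTerm (PadicInt.hasSum_mahlerSeries hc)⟩

lemma exists_hasSum_mul_bK_of_continuous {g : ℤ_[p] → K} (hg : Continuous g) :
    ∃ b : ℕ → K, Tendsto b atTop (𝓝 0) ∧ ∀ x, HasSum (fun n => b n * bK p K n x) (g x) :=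
  have := isUltrametricDist_of_padicAlgebra p (K := K)
  ⟨_, PadicInt.fwdDiff_tendsto_zero ⟨g, hg⟩,
    hasSum_mul_bK_of_hasSum_mahlerTerm (PadicInt.hasSum_mahler ⟨g, hg⟩)⟩

variable (p) in
lemma exists_continuous_Sop_hasSum {b : ℕ → K}
    (hb : Tendsto b atTop (𝓝 0)) :
    ∃ F : C(ℤ_[p], K), (∀ x, HasSum (fun n => sopInvMahlerCoeff b n * bK p K n x) (F x)) ∧
      ∀ x, HasSum (fun n => b n * bK p K n x) (Sop p K F x) := by
  obtain ⟨F, hF⟩ := exists_continuous_hasSum_mul_bK p (tendsto_sopInvMahlerCoeff p hb)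
  exact ⟨F, hF, fun x => by simpa only [sopInvMahlerCoeff_sub_mul_pred] using hasSum_Sop hF x⟩

end Mahler

end PadicAlgebra

/-- `S` is a bijective `K`-linear automorphism of `C(ℤ_[p], K)`
(it is injective and surjective on continuous functions, and linear), and if
`g = Σₖ bₖ βₖ` then `S⁻¹ g = Σₙ (Σ_{k=0}^n (n!/k!) bₖ) βₙ`. -/
theorem stmt_4 (p : ℕ) [Fact p.Prime] (K : Type*) [NontriviallyNormedField K]
    [NormedAlgebra ℚ_[p] K] [CompleteSpace K] :
    (∀ (f g : ℤ_[p] → K) (c : K), Sop p K (c • f + g) = c • Sop p K f + Sop p K g) ∧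
    (∀ f g : ℤ_[p] → K, Continuous f → Continuous g →
      Sop p K f = Sop p K g → f = g) ∧
    (∀ g : ℤ_[p] → K, Continuous g → ∃ f : ℤ_[p] → K, Continuous f ∧ Sop p K f = g) ∧
    (∀ (g : ℤ_[p] → K) (b : ℕ → K), Continuous g → Tendsto b atTop (nhds 0) →
      (∀ x, g x = ∑' n : ℕ, b n * bK p K n x) →
      ∀ (f : ℤ_[p] → K), Continuous f → Sop p K f = g →
        ∀ x, f x = ∑' n : ℕ,
          (∑ k ∈ Finset.range (n + 1), ((n.factorial / k.factorial : ℕ) : K) * b k)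
            * bK p K n x) := by
  refine ⟨fun f g c => ?_, fun f g => eq_of_Sop_eq, fun g hg => ?_,
    fun g b _ hb hgb f hf hfg x => ?_⟩
  · funext x
    simp only [Sop, Pi.add_apply, Pi.smul_apply, smul_eq_mul]
    ring
  · obtain ⟨b, hb, hgb⟩ := exists_hasSum_mul_bK_of_continuous hg
    obtain ⟨F, -, hSF⟩ := exists_continuous_Sop_hasSum p hb
    exact ⟨F, F.continuous, funext fun x => (hSF x).unique (hgb x)⟩
  · obtain ⟨F, hF, hSF⟩ := exists_continuous_Sop_hasSum p hb
    have hfF : f = F := eq_of_Sop_eq hf F.continuous <| hfg.trans <|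
      funext fun x => by rw [hgb x, (hSF x).tsum_eq]
    rw [hfF]
    exact (hF x).tsum_eq.symm
end

section
/- If S(f) = 0 for a continuous f : ℤₚ → ℂₚ (i.e., f(x) = x·f(x−1) for all x ∈ ℤₚ), then f = 0. -/
open Filter Finset

/-- If `f : ℤ_[p] → K` is continuous and `f(x) = x·f(x-1)` for all
`x ∈ ℤ_[p]` (i.e. `S f = 0`), then `f = 0`. -/
theorem stmt_5 (p : ℕ) [Fact p.Prime] (K : Type*) [NontriviallyNormedField K]
    [NormedAlgebra ℚ_[p] K] [CompleteSpace K]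
    (f : ℤ_[p] → K) (hf : Continuous f)
    (h : ∀ x : ℤ_[p], f x = pc p K x * f (x - 1)) :
    f = 0 := by
  have key : ∀ n : ℕ, f (n : ℤ_[p]) = 0 := by
    intro n
    induction n with
    | zero =>
      have := h 0
      simpa [pc] using this
    | succ n ih =>
      have := h ((n + 1 : ℕ) : ℤ_[p])
      rw [this]
      have : (((n + 1 : ℕ) : ℤ_[p]) - 1) = (n : ℤ_[p]) := by push_cast; ring
      rw [this, ih, mul_zero]
  have hd : Dense (Set.range (Nat.cast : ℕ → ℤ_[p])) :=
    PadicInt.denseRange_natCast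
  exact Continuous.ext_on hd hf continuous_const (by rintro _ ⟨n, rfl⟩; exact key n)
end

section
/- The operator S restricts to an automorphism of the space of locally analytic functions ℤₚ → ℂₚ: if g is locally analytic, then the unique continuous f with f(x) − x·f(x−1) = g(x) is also locally analytic. -/
open Filter Finset

-- The `p`-adic valuation on `K`, normalized so that `v p = 1`, with `v 0 = ⊤`.
open scoped Classical in
noncomputable def vK (p : ℕ) [Fact p.Prime] (K : Type*) [NontriviallyNormedField K]
    [NormedAlgebra ℚ_[p] K] (x : K) : EReal :=
  if x = 0 then ⊤ else ((- Real.logb p ‖x‖ : ℝ) : EReal)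

/-!
At a natural number `j` the Mahler series are finite sums `∑ₖ cₖ C(j,k)`, and such binomial
transforms determine `c`. Evaluating `S f = g` at `j` and using `j·C(j-1,k) = (k+1)·C(j,k+1)` turns
`S` into `aₙ - n·aₙ₋₁ = bₙ`, whence `aₙ = ∑ₖ (n!/k!)·bₖ`. Amice's condition means `‖bₖ‖ ≤ C rᵏ`
with `r < 1`, while `p^⌊m/p⌋ ∣ m!` and `(n-k)! ∣ n!/k!` give `‖n!/k!‖ ≤ p·σ^(n-k)` with
`σ = p^(-1/p)`. The ultrametric inequality then gives `‖aₙ‖ ≤ p·C·max(r, σ)ⁿ`.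
-/

section BinomialTransform

variable {R : Type*} [CommRing R]

def binomialTransform (c : ℕ → R) (j : ℕ) : R :=
  ∑ k ∈ range (j + 1), c k * j.choose k

theorem binomialTransform_injective : Function.Injective (binomialTransform (R := R)) := by
  intro c d h
  funext n
  induction n using Nat.strong_induction_on with
  | _ n ih =>
    have hn := congrFun h n
    simp only [binomialTransform, sum_range_succ, Nat.choose_self, Nat.cast_one, mul_one] at hn
    rwa [sum_congr rfl fun k hk => by rw [ih k (mem_range.1 hk)], add_right_inj] at hn

theorem binomialTransform_sub (c d : ℕ → R) :
    binomialTransform (c - d) = binomialTransform c - binomialTransform d := by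
  funext j
  simp only [binomialTransform, Pi.sub_apply, sub_mul, sum_sub_distrib]

-- At `n = 0` the truncated `n - 1` is harmless: the factor `n` vanishes.
theorem binomialTransform_natCast_mul_pred (c : ℕ → R) (j : ℕ) :
    binomialTransform (fun n => (n : R) * c (n - 1)) j = j * binomialTransform c (j - 1) := by
  cases j with
  | zero => simp [binomialTransform]
  | succ m =>
    simp only [binomialTransform, sum_range_succ' _ (m + 1), Nat.cast_zero, zero_mul, add_zero,
      Nat.add_sub_cancel, mul_sum]
    refine sum_congr rfl fun k _ => ?_
    have hchoose := congrArg (Nat.cast (R := R)) (Nat.add_one_mul_choose_eq m k)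
    push_cast at hchoose ⊢
    linear_combination c k * hchoose.symm

theorem eq_sum_descFactorial_mul {a b : ℕ → R} (h : ∀ n, a n - n * a (n - 1) = b n) (n : ℕ) :
    a n = ∑ k ∈ range (n + 1), (n.descFactorial (n - k) : R) * b k := by
  induction n with
  | zero => simpa using h 0
  | succ n ih =>
    rw [sum_range_succ, Nat.sub_self, Nat.descFactorial_zero, Nat.cast_one, one_mul,
      ← h (n + 1), Nat.add_sub_cancel, ih, mul_sum]
    have hdesc : ∀ k ∈ range (n + 1), ((n + 1).descFactorial (n + 1 - k) : R) * b k
        = (n + 1 : ℕ) * ((n.descFactorial (n - k) : R) * b k) := fun k hk => by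
      rw [Nat.sub_add_comm (mem_range_succ_iff.1 hk), Nat.succ_descFactorial_succ]
      push_cast; ring
    rw [sum_congr rfl hdesc]
    ring

end BinomialTransform

theorem Nat.Prime.pow_div_dvd_factorial {p : ℕ} (hp : p.Prime) (m : ℕ) :
    p ^ (m / p) ∣ m.factorial := by
  rcases m.eq_zero_or_pos with rfl | hm
  · simp
  · rw [hp.pow_dvd_factorial_iff (Nat.lt_succ_of_lt (Nat.log_lt_self p hm.ne'))]
    simpa using single_le_sum (f := fun i => m / p ^ i) (fun _ _ => Nat.zero_le _)
      (mem_Ico.2 ⟨le_rfl, Nat.succ_lt_succ hm⟩)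

section Padic

variable (p : ℕ) [Fact p.Prime] (K : Type*) [NontriviallyNormedField K] [NormedAlgebra ℚ_[p] K]

theorem bK_natCast (k j : ℕ) : bK p K k j = j.choose k := by
  have : CharZero K := charZero_of_injective_algebraMap (algebraMap ℚ_[p] K).injective
  rw [bK, show pc p K j = j by simp [pc], ← descPochhammer_eval_eq_prod_range,
    descPochhammer_eval_eq_descFactorial, Nat.descFactorial_eq_factorial_mul_choose, Nat.cast_mul,
    mul_div_cancel_left₀ _ (Nat.cast_ne_zero.2 k.factorial_ne_zero)]

theorem tsum_mul_bK_natCast (c : ℕ → K) (j : ℕ) :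
    ∑' n, c n * bK p K n j = binomialTransform c j := by
  rw [tsum_eq_sum (s := range (j + 1)) fun k hk => by
    rw [bK_natCast, Nat.choose_eq_zero_of_lt (by simpa using hk), Nat.cast_zero, mul_zero]]
  simp only [bK_natCast, binomialTransform]

variable {p K} in
theorem mahler_coeff_sub_natCast_mul_pred_of_Sop_eq {f g : ℤ_[p] → K} {a b : ℕ → K}
    (hSf : Sop p K f = g) (hfm : ∀ x, f x = ∑' n, a n * bK p K n x)
    (hgm : ∀ x, g x = ∑' n, b n * bK p K n x) (n : ℕ) :
    a n - n * a (n - 1) = b n := by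
  suffices binomialTransform (a - fun n : ℕ => (n : K) * a (n - 1)) = binomialTransform b from
    congrFun (binomialTransform_injective this) n
  have hf (i : ℕ) : f i = binomialTransform a i := (hfm i).trans (tsum_mul_bK_natCast p K a i)
  have hg (i : ℕ) : g i = binomialTransform b i := (hgm i).trans (tsum_mul_bK_natCast p K b i)
  funext j
  rw [binomialTransform_sub, Pi.sub_apply, binomialTransform_natCast_mul_pred, ← hf, ← hg, ← hSf]
  rcases j with _ | m
  · simp [Sop, pc]
  · simp only [Sop, Nat.add_sub_cancel, ← hf, show ((m + 1 : ℕ) : ℤ_[p]) - 1 = m by push_cast; ring]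
    simp [pc]

theorem norm_natCast_le_of_pow_dvd {N e : ℕ} (h : p ^ e ∣ N) : ‖(N : K)‖ ≤ (p : ℝ)⁻¹ ^ e := by
  have := IsUltrametricDist.of_normedAlgebra ℚ_[p] (L := K)
  obtain ⟨M, rfl⟩ := h
  have hp : ‖(p : K)‖ = (p : ℝ)⁻¹ := by
    rw [← map_natCast (algebraMap ℚ_[p] K), norm_algebraMap', Padic.norm_p]
  rw [Nat.cast_mul, Nat.cast_pow, norm_mul, norm_pow, hp]
  exact mul_le_of_le_one_right (by positivity) (IsUltrametricDist.norm_natCast_le_one K M)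

theorem norm_descFactorial_le (n m : ℕ) :
    ‖(n.descFactorial m : K)‖ ≤ p * ((p : ℝ) ^ (-(p : ℝ)⁻¹)) ^ m := by
  have hp : (1 : ℝ) < p := by exact_mod_cast (Fact.out : p.Prime).one_lt
  have hp0 : (0 : ℝ) < p := zero_lt_one.trans hp
  have hfloor : (m : ℝ) / p < (m / p : ℕ) + 1 := by
    simpa [Nat.floor_div_eq_div] using Nat.lt_floor_add_one ((m : ℝ) / p)
  calc ‖(n.descFactorial m : K)‖
      ≤ (p : ℝ)⁻¹ ^ (m / p) := norm_natCast_le_of_pow_dvd p K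
        (((Fact.out : p.Prime).pow_div_dvd_factorial m).trans (n.factorial_dvd_descFactorial m))
    _ = (p : ℝ) ^ (-((m / p : ℕ) : ℝ)) := by rw [Real.rpow_neg hp0.le, Real.rpow_natCast, inv_pow]
    _ ≤ (p : ℝ) ^ (1 + -(p : ℝ)⁻¹ * m) := by
        refine Real.rpow_le_rpow_of_exponent_le hp.le ?_
        have := div_eq_inv_mul (m : ℝ) p
        linarith
    _ = p * ((p : ℝ) ^ (-(p : ℝ)⁻¹)) ^ m := by
        rw [Real.rpow_add hp0, Real.rpow_one, Real.rpow_mul hp0.le, Real.rpow_natCast]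

theorem norm_sum_descFactorial_mul_le {b : ℕ → K} {C r : ℝ} (hr : 0 ≤ r)
    (hb : ∀ k, ‖b k‖ ≤ C * r ^ k) (n : ℕ) :
    ‖∑ k ∈ range (n + 1), (n.descFactorial (n - k) : K) * b k‖
      ≤ p * C * max r ((p : ℝ) ^ (-(p : ℝ)⁻¹)) ^ n := by
  have := IsUltrametricDist.of_normedAlgebra ℚ_[p] (L := K)
  set ρ := max r ((p : ℝ) ^ (-(p : ℝ)⁻¹))
  have hC : 0 ≤ C := by simpa using (norm_nonneg _).trans (hb 0)
  refine IsUltrametricDist.norm_sum_le_of_forall_le_of_nonneg (by positivity) fun k hk => ?_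
  have hkn : k ≤ n := mem_range_succ_iff.1 hk
  calc ‖(n.descFactorial (n - k) : K) * b k‖
      ≤ (p * ((p : ℝ) ^ (-(p : ℝ)⁻¹)) ^ (n - k)) * (C * r ^ k) := by
        rw [norm_mul]
        exact mul_le_mul (norm_descFactorial_le p K n (n - k)) (hb k) (norm_nonneg _)
          (by positivity)
    _ ≤ (p * ρ ^ (n - k)) * (C * ρ ^ k) := by
        gcongr
        exacts [le_max_right _ _, le_max_left _ _]
    _ = p * C * ρ ^ n := by
        rw [← Nat.sub_add_cancel hkn, pow_add, Nat.add_sub_cancel]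
        ring

variable {K} in
theorem coe_le_vK_div_iff (c : ℝ) (y : K) {n : ℕ} (hn : 0 < n) :
    (c : EReal) ≤ vK p K y / ((n : ℝ) : EReal) ↔ ‖y‖ ≤ ((p : ℝ) ^ (-c)) ^ n := by
  have hp : (1 : ℝ) < p := by exact_mod_cast (Fact.out : p.Prime).one_lt
  have hn' : (0 : ℝ) < n := by exact_mod_cast hn
  rcases eq_or_ne y 0 with rfl | hy
  · simp only [vK, if_pos, norm_zero]
    rw [EReal.top_div_of_pos_ne_top (by exact_mod_cast hn') (EReal.coe_ne_top _)]
    simp only [le_top, true_iff]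
    positivity
  · rw [vK, if_neg hy, ← EReal.coe_div, EReal.coe_le_coe_iff, le_div_iff₀ hn',
      ← Real.rpow_natCast, ← Real.rpow_mul (by positivity),
      ← Real.logb_le_iff_le_rpow hp (norm_pos_iff.2 hy)]
    constructor <;> intro h <;> linarith

variable {K} in
theorem liminf_vK_div_pos_iff (x : ℕ → K) :
    0 < liminf (fun n : ℕ => vK p K (x n) / ((n : ℝ) : EReal)) atTop ↔
      ∃ r ∈ Set.Ioo (0 : ℝ) 1, ∃ C > 0, ∀ n, ‖x n‖ ≤ C * r ^ n := by
  have hp : (1 : ℝ) < p := by exact_mod_cast (Fact.out : p.Prime).one_lt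
  have hgeom := (TFAE_exists_lt_isLittleO_pow (fun n => ‖x n‖) 1).out 7 5
  simp only [abs_norm] at hgeom
  rw [← hgeom]
  constructor
  · intro h
    obtain ⟨c, hc0, hc⟩ := EReal.exists_between_coe_real h
    refine ⟨(p : ℝ) ^ (-c), ⟨by positivity, Real.rpow_lt_one_of_one_lt_of_neg hp
      (by simpa using (EReal.coe_lt_coe_iff.1 hc0))⟩, ?_⟩
    filter_upwards [eventually_lt_of_lt_liminf hc, eventually_gt_atTop 0] with n hn hn0
    exact (coe_le_vK_div_iff p c (x n) hn0).1 hn.le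
  · rintro ⟨r, ⟨hr0, hr1⟩, hx⟩
    have hc : (p : ℝ) ^ (-(-Real.logb p r)) = r := by
      rw [neg_neg, Real.rpow_logb (by positivity) hp.ne' hr0]
    have hc0 : (0 : EReal) < (-Real.logb p r : ℝ) :=
      EReal.coe_pos.2 (neg_pos.2 (Real.logb_neg hp hr0 hr1))
    refine hc0.trans_le (le_liminf_of_le (by isBoundedDefault) ?_)
    filter_upwards [hx, eventually_gt_atTop 0] with n hn hn0
    rwa [coe_le_vK_div_iff p _ (x n) hn0, hc]

end Padic

theorem stmt_7_general (p : ℕ) [Fact p.Prime] (K : Type*) [NontriviallyNormedField K]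
    [NormedAlgebra ℚ_[p] K]
    (g : ℤ_[p] → K) (b : ℕ → K)
    (hgm : ∀ x, g x = ∑' n : ℕ, b n * bK p K n x)
    (hgla : 0 < Filter.liminf (fun n : ℕ => vK p K (b n) / ((n : ℝ) : EReal)) Filter.atTop)
    (f : ℤ_[p] → K) (hSf : Sop p K f = g)
    (a : ℕ → K)
    (hfm : ∀ x, f x = ∑' n : ℕ, a n * bK p K n x) :
    0 < Filter.liminf (fun n : ℕ => vK p K (a n) / ((n : ℝ) : EReal)) Filter.atTop := by
  obtain ⟨r, hr, C, hC, hbC⟩ := (liminf_vK_div_pos_iff p b).1 hgla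
  have hp : (1 : ℝ) < p := by exact_mod_cast (Fact.out : p.Prime).one_lt
  have hσ : (p : ℝ) ^ (-(p : ℝ)⁻¹) < 1 :=
    Real.rpow_lt_one_of_one_lt_of_neg hp (neg_neg_of_pos (by positivity))
  refine (liminf_vK_div_pos_iff p a).2 ⟨max r ((p : ℝ) ^ (-(p : ℝ)⁻¹)),
    ⟨lt_max_of_lt_left hr.1, max_lt hr.2 hσ⟩, p * C, by positivity, fun n => ?_⟩
  rw [eq_sum_descFactorial_mul (mahler_coeff_sub_natCast_mul_pred_of_Sop_eq hSf hfm hgm) n]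
  exact norm_sum_descFactorial_mul_le p K hr.1.le hbC n

/-- `S` restricts to an automorphism of locally analytic functions:
if `g` is locally analytic (Amice's criterion `liminf vₚ(bₙ)/n > 0` on its Mahler
coefficients), and `f` is the unique continuous function with `S f = g`, with
Mahler coefficients `(aₙ)`, then `f` is locally analytic. -/
theorem stmt_7 (p : ℕ) [Fact p.Prime] (K : Type*) [NontriviallyNormedField K]
    [NormedAlgebra ℚ_[p] K] [CompleteSpace K]
    (g : ℤ_[p] → K) (hg : Continuous g) (b : ℕ → K)
    (hb : Tendsto b atTop (nhds 0))
    (hgm : ∀ x, g x = ∑' n : ℕ, b n * bK p K n x)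
    (hgla : 0 < Filter.liminf (fun n : ℕ => vK p K (b n) / ((n : ℝ) : EReal)) Filter.atTop)
    (f : ℤ_[p] → K) (hf : Continuous f) (hSf : Sop p K f = g)
    (a : ℕ → K) (ha : Tendsto a atTop (nhds 0))
    (hfm : ∀ x, f x = ∑' n : ℕ, a n * bK p K n x) :
    0 < Filter.liminf (fun n : ℕ => vK p K (a n) / ((n : ℝ) : EReal)) Filter.atTop :=
  stmt_7_general p K g b hgm hgla f hSf a hfm
end

section
/- If an automatically seeded first-order linear recurrence aₙ = h(n)·aₙ₋₁ + g(n) (n ≥ 1), where h, g : ℤₚ → ℂₚ are continuous and h(n₀) = 0 for some integer n₀, admits a solution (aₙ)_{n≥0} interpolated by a continuous function ℤₚ → ℂₚ, then that solution is unique. -/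
open Filter Finset

/-- If an automatically seeded first-order linear recurrence
`aₙ = h(n)·aₙ₋₁ + g(n)` (`n ≥ 1`), where `h, g : ℤ_[p] → K` are continuous and
`h(n₀) = 0` for some integer `n₀`, admits a solution interpolated by a
continuous function `ℤ_[p] → K`, then that solution is unique. -/
theorem stmt_9 (p : ℕ) [Fact p.Prime] (K : Type*) [NontriviallyNormedField K]
    [NormedAlgebra ℚ_[p] K] [CompleteSpace K]
    (h g : ℤ_[p] → K) (hh : Continuous h) (hg : Continuous g)
    (n₀ : ℤ) (hseed : h (n₀ : ℤ_[p]) = 0)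
    (a a' : ℕ → K)
    (ha : ∀ n : ℕ, 1 ≤ n → a n = h (n : ℤ_[p]) * a (n - 1) + g (n : ℤ_[p]))
    (ha' : ∀ n : ℕ, 1 ≤ n → a' n = h (n : ℤ_[p]) * a' (n - 1) + g (n : ℤ_[p]))
    (f f' : ℤ_[p] → K) (hf : Continuous f) (hf' : Continuous f')
    (hinterp : ∀ n : ℕ, f (n : ℤ_[p]) = a n)
    (hinterp' : ∀ n : ℕ, f' (n : ℤ_[p]) = a' n) :
    a = a' := by
  set F : ℤ_[p] → K := fun x => f x - f' x with hFdef
  have hFc : Continuous F := hf.sub hf'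
  -- the functional equation on naturals extends to all of ℤ_[p]
  have key : ∀ x : ℤ_[p], F (x + 1) = h (x + 1) * F x := by
    have h1 : Continuous (fun x : ℤ_[p] => F (x + 1)) :=
      hFc.comp (continuous_id.add continuous_const)
    have h2 : Continuous (fun x : ℤ_[p] => h (x + 1) * F x) :=
      ((hh.comp (continuous_id.add continuous_const)).mul hFc)
    have hd : Dense (Set.range ((↑) : ℕ → ℤ_[p])) := PadicInt.denseRange_natCast
    have := Continuous.ext_on hd h1 h2 ?_
    · exact fun x => congrFun this x
    · rintro _ ⟨n, rfl⟩
      have hcast : ((n : ℤ_[p]) + 1) = ((n + 1 : ℕ) : ℤ_[p]) := by push_cast; ring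
      simp only [hFdef, hcast]
      rw [hinterp, hinterp', hinterp, hinterp', ha (n + 1) (by omega),
        ha' (n + 1) (by omega)]
      simp only [Nat.add_sub_cancel]
      ring
  have key2 : ∀ x : ℤ_[p], F x = h x * F (x - 1) := by
    intro x
    have := key (x - 1)
    simpa using this
  have zero : ∀ k : ℕ, F ((n₀ : ℤ_[p]) + k) = 0 := by
    intro k
    induction k with
    | zero => simpa [key2 ((n₀ : ℤ_[p])), hseed] using key2 ((n₀ : ℤ_[p]))
    | succ k ih =>
      have hcast : ((n₀ : ℤ_[p]) + ((k + 1 : ℕ) : ℤ_[p])) = ((n₀ : ℤ_[p]) + k) + 1 := by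
        push_cast; ring
      rw [hcast, key, ih, mul_zero]
  have hdense : DenseRange (fun k : ℕ => (n₀ : ℤ_[p]) + (k : ℤ_[p])) := by
    have he : DenseRange (fun y : ℤ_[p] => (n₀ : ℤ_[p]) + y) :=
      (Homeomorph.addLeft ((n₀ : ℤ_[p]))).surjective.denseRange
    exact he.comp PadicInt.denseRange_natCast (continuous_const.add continuous_id)
  have Fzero : ∀ x : ℤ_[p], F x = 0 := by
    have := Continuous.ext_on hdense hFc continuous_const
      (by rintro _ ⟨k, rfl⟩; exact zero k)
    exact fun x => congrFun this x
  funext n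
  have := Fzero (n : ℤ_[p])
  simp only [hFdef, hinterp, hinterp'] at this
  linear_combination this
end

section
/- The function q : ℤₚ → ℤₚ defined by q(x) = Σ_{n=0}^∞ n!·C(x,n) is well-defined and continuous, satisfies q(x) = x·q(x−1) + 1 for all x ∈ ℤₚ, and is the unique continuous solution to the recurrence aₙ = n·aₙ₋₁ + 1. -/
open Filter

/-- The function `q(x) = Σ_{n=0}^∞ n!·C(x,n) : ℤ_[p] → ℤ_[p]`, with the binomial
coefficient `C(x,n)` realized by `Ring.choose`. -/
noncomputable def qfun (p : ℕ) [Fact p.Prime] (x : ℤ_[p]) : ℤ_[p] :=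
  ∑' n : ℕ, (n.factorial : ℤ_[p]) * Ring.choose x n

/-!
`q` is the Mahler series with coefficients `n!`, which tend to `0` because `p ^ k ∣ n!` as soon
as `p ^ k ≤ n`; hence it converges uniformly and is continuous. The recurrence comes termwise
from `(n+1)! C(x, n+1) = x · n! C(x-1, n)`. For uniqueness, a continuous `g` with
`g (n+1) = (n+1) g n` satisfies `g n = n! g 0`, so `g 0 = lim g (p ^ k) = lim (p ^ k)! g 0 = 0`;
then `g` vanishes on the dense set `ℕ`, hence everywhere.
-/

open Polynomial Topology

namespace Ring

theorem factorial_mul_choose_succ {R : Type*} [CommRing R] [BinomialRing R] (x : R) (n : ℕ) :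
    ((n + 1).factorial : R) * choose x (n + 1) = x * ((n.factorial : R) * choose (x - 1) n) := by
  simp only [← nsmul_eq_mul, ← descPochhammer_eq_factorial_smul_choose, descPochhammer_succ_left,
    smeval_mul, smeval_X, smeval_comp, smeval_sub, smeval_one, pow_one, pow_zero, one_smul]

end Ring

namespace PadicInt

variable {p : ℕ} [Fact p.Prime]

theorem tendsto_natCast_pow_p_nhds_zero :
    Tendsto (fun k : ℕ => ((p ^ k : ℕ) : ℤ_[p])) atTop (𝓝 0) := by
  simpa only [Nat.cast_pow] using
    tendsto_pow_atTop_nhds_zero_of_norm_lt_one ((norm_lt_one_iff_dvd (p : ℤ_[p])).2 dvd_rfl)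

theorem tendsto_factorial_nhds_zero :
    Tendsto (fun n : ℕ => (n.factorial : ℤ_[p])) atTop (𝓝 0) := by
  rw [NormedAddGroup.tendsto_nhds_zero]
  intro ε hε
  obtain ⟨k, hk⟩ :=
    (NormedAddGroup.tendsto_nhds_zero.1 (tendsto_natCast_pow_p_nhds_zero (p := p)) ε hε).exists
  filter_upwards [eventually_ge_atTop (p ^ k)] with n hn
  obtain ⟨c, hc⟩ := Nat.dvd_factorial (pow_pos (Fact.out : p.Prime).pos k) hn
  calc ‖(n.factorial : ℤ_[p])‖ = ‖((p ^ k : ℕ) : ℤ_[p])‖ * ‖(c : ℤ_[p])‖ := by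
        rw [hc, Nat.cast_mul, norm_mul]
    _ ≤ ‖((p ^ k : ℕ) : ℤ_[p])‖ := mul_le_of_le_one_right (norm_nonneg _) (norm_le_one _)
    _ < ε := hk

section Uniqueness

variable {E : Type*} {g : ℤ_[p] → E}

theorem map_natCast_eq_factorial_smul [MulAction ℤ_[p] E]
    (hg : ∀ n : ℕ, g ((n : ℤ_[p]) + 1) = ((n : ℤ_[p]) + 1) • g n) (n : ℕ) :
    g n = (n.factorial : ℤ_[p]) • g 0 := by
  induction n with
  | zero => simp
  | succ n ih => rw [Nat.cast_succ, hg, ih, smul_smul, Nat.factorial_succ]; push_cast; rfl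

theorem eq_zero_of_continuous_of_map_natCast_succ [TopologicalSpace E] [T2Space E] [Zero E]
    [MulActionWithZero ℤ_[p] E] [ContinuousSMul ℤ_[p] E] (hcont : Continuous g)
    (hg : ∀ n : ℕ, g ((n : ℤ_[p]) + 1) = ((n : ℤ_[p]) + 1) • g n) : g = 0 := by
  have hg0 : g 0 = 0 := by
    have h_lim : Tendsto (fun k => g (p ^ k : ℕ)) atTop (𝓝 (g 0)) :=
      hcont.continuousAt.tendsto.comp tendsto_natCast_pow_p_nhds_zero
    have h_zero : Tendsto (fun k => g (p ^ k : ℕ)) atTop (𝓝 0) := by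
      simp only [map_natCast_eq_factorial_smul hg]
      simpa only [zero_smul, Function.comp_def] using ((tendsto_factorial_nhds_zero (p := p)).comp
        (tendsto_pow_atTop_atTop_of_one_lt (Fact.out : p.Prime).one_lt)).smul_const (g 0)
    exact tendsto_nhds_unique h_lim h_zero
  refine hcont.ext_on denseRange_natCast continuous_const ?_
  rintro _ ⟨n, rfl⟩
  simp [map_natCast_eq_factorial_smul hg, hg0]

end Uniqueness

end PadicInt

section qfun

open PadicInt

variable {p : ℕ} [Fact p.Prime]

theorem qfun_eq_mahlerSeries : qfun p = mahlerSeries fun n => (n.factorial : ℤ_[p]) := by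
  funext x
  rw [mahlerSeries_apply tendsto_factorial_nhds_zero]
  exact tsum_congr fun n => mul_comm _ _

theorem summable_factorial_mul_choose (x : ℤ_[p]) :
    Summable fun n : ℕ => (n.factorial : ℤ_[p]) * Ring.choose x n := by
  refine (ContinuousMap.summable_apply
    (hasSum_mahlerSeries tendsto_factorial_nhds_zero).summable x).congr fun n => ?_
  rw [mahlerTerm_apply, mahler_apply, smul_eq_mul, mul_comm]

theorem continuous_qfun : Continuous (qfun p) :=
  qfun_eq_mahlerSeries (p := p) ▸ ContinuousMap.continuous _

theorem qfun_eq_mul_qfun_sub_one_add_one (x : ℤ_[p]) : qfun p x = x * qfun p (x - 1) + 1 := by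
  rw [qfun, qfun, (summable_factorial_mul_choose x).tsum_eq_zero_add]
  simp only [Ring.factorial_mul_choose_succ, (summable_factorial_mul_choose (x - 1)).tsum_mul_left]
  simp [add_comm]

end qfun

/-- `q(x) = Σ n!·C(x,n)` is well-defined (the series is summable)
and continuous, satisfies `q(x) = x·q(x-1) + 1` for all `x ∈ ℤ_[p]`, and is the
unique continuous solution to the recurrence `aₙ = n·aₙ₋₁ + 1`. -/
theorem stmt_10 (p : ℕ) [Fact p.Prime] :
    (∀ x : ℤ_[p], Summable (fun n : ℕ => (n.factorial : ℤ_[p]) * Ring.choose x n)) ∧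
    Continuous (qfun p) ∧
    (∀ x : ℤ_[p], qfun p x = x * qfun p (x - 1) + 1) ∧
    (∀ f : ℤ_[p] → ℤ_[p], Continuous f →
      (∀ n : ℕ, f ((n : ℤ_[p]) + 1) = ((n : ℤ_[p]) + 1) * f (n : ℤ_[p]) + 1) →
      f = qfun p) := by
  refine ⟨summable_factorial_mul_choose, continuous_qfun, qfun_eq_mul_qfun_sub_one_add_one,
    fun f hf hrec => ?_⟩
  have hdiff : f - qfun p = 0 := by
    refine PadicInt.eq_zero_of_continuous_of_map_natCast_succ (hf.sub continuous_qfun) fun n => ?_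
    have hq := qfun_eq_mul_qfun_sub_one_add_one (p := p) (n + 1)
    rw [add_sub_cancel_right] at hq
    simp only [Pi.sub_apply, smul_eq_mul, hrec n, hq]
    ring
  exact sub_eq_zero.1 hdiff
end

section
/- If r ∈ ℂₚ with |r − 1| ≤ (1/3)^{1/3}, then the function g_r : ℤₚ → ℂₚ, x ↦ r^x = Σₙ (r−1)ⁿ C(x,n), is 1-Lipschitz; in particular, so is f_r = S⁻¹(g_r). -/
/-!
The binomial function `C(·, n)` is the image of `Ring.choose` on `ℤ_[p]`. From
`n • C(z, n) = z · C(z - 1, n - 1)` and `|n|_p ≥ 1/n` one gets `|C(z, n)| ≤ n |z|`, and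
Chu–Vandermonde makes `C(·, n)` `n`-Lipschitz. Since `n q^n ≤ 1` once `q³ ≤ 1/3`, the
ultrametric inequality makes `x ↦ r^x` 1-Lipschitz.

For `S⁻¹`: iterating `|f x| ≤ max (|S f x|, |x| |f (x - 1)|)` bounds a bounded `f` at `x` by
`max (sup |S f|, |x (x - 1) ⋯ (x - n + 1)| sup |f|)`; the product is divisible by `n!`, which is
`p`-adically small for `n = p^k`, so `sup |f| ≤ sup |S f|`. Applied to `f (· + t) - f`, whose image
under `S` is `S f (· + t) - S f + t f (· + t - 1)`, this bounds `|f (x + t) - f x|` by `|t|`.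
-/

open Filter Finset

open Polynomial in
lemma descPochhammer_smeval_eq_prod_range {R : Type*} [CommRing R] (n : ℕ) (x : R) :
    (descPochhammer ℤ n).smeval x = ∏ i ∈ range n, (x - i) := by
  rw [← aeval_eq_smeval, aeval_def, ← eval_map, descPochhammer_map,
    descPochhammer_eval_eq_prod_range]

open Polynomial in
lemma descPochhammer_smeval_succ {R : Type*} [CommRing R] (n : ℕ) (x : R) :
    (descPochhammer ℤ (n + 1)).smeval x = x * (descPochhammer ℤ n).smeval (x - 1) := by
  rw [descPochhammer_succ_left, smeval_mul, smeval_comp, smeval_sub, smeval_X, smeval_one]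
  simp

lemma Nat.pow_three_le_three_pow (n : ℕ) : n ^ 3 ≤ 3 ^ n := by
  rcases lt_or_ge n 3 with h | h
  · interval_cases n <;> norm_num
  induction n, h using Nat.le_induction with
  | base => norm_num
  | succ n hn ih =>
    calc (n + 1) ^ 3 ≤ 3 * n ^ 3 := by nlinarith [Nat.mul_le_mul_left (n * n) hn]
      _ ≤ 3 ^ (n + 1) := (Nat.mul_le_mul_left 3 ih).trans_eq Nat.pow_succ'.symm

lemma natCast_mul_pow_le_one {q : ℝ} (hq0 : 0 ≤ q) (hq : q ^ 3 ≤ 1 / 3) (n : ℕ) :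
    n * q ^ n ≤ 1 := by
  refine (pow_le_one_iff_of_nonneg (by positivity) three_ne_zero).mp ?_
  calc ((n : ℝ) * q ^ n) ^ 3 = (n : ℝ) ^ 3 * (q ^ 3) ^ n := by ring
    _ ≤ (n : ℝ) ^ 3 * (1 / 3) ^ n := by gcongr
    _ ≤ 1 := by
      rw [one_div_pow, mul_one_div, div_le_one (by positivity)]
      exact_mod_cast n.pow_three_le_three_pow

namespace PadicInt

variable {p : ℕ} [Fact p.Prime]

lemma one_le_natCast_mul_norm_natCast {n : ℕ} (hn : n ≠ 0) : 1 ≤ n * ‖(n : ℤ_[p])‖ := by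
  have hn' : (n : ℚ_[p]) ≠ 0 := Nat.cast_ne_zero.mpr hn
  rw [norm_def, coe_natCast, Padic.norm_eq_zpow_neg_valuation hn', Padic.valuation_natCast,
    zpow_neg, zpow_natCast, ← div_eq_mul_inv,
    one_le_div (pow_pos (Nat.cast_pos.mpr (Fact.out : p.Prime).pos) _)]
  exact_mod_cast Nat.le_of_dvd (Nat.pos_of_ne_zero hn) pow_padicValNat_dvd

lemma norm_choose_le (z : ℤ_[p]) {n : ℕ} (hn : n ≠ 0) : ‖Ring.choose z n‖ ≤ n * ‖z‖ := by
  obtain ⟨m, rfl⟩ := Nat.exists_eq_succ_of_ne_zero hn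
  have key : ((m + 1 : ℕ) : ℤ_[p]) * Ring.choose z (m + 1) = z * Ring.choose (z - 1) m := by
    simpa [nsmul_eq_mul] using Ring.choose_smul_choose z (Nat.le_add_left 1 m)
  have hle : ‖((m + 1 : ℕ) : ℤ_[p])‖ * ‖Ring.choose z (m + 1)‖ ≤ ‖z‖ := by
    rw [← norm_mul, key, norm_mul]
    exact mul_le_of_le_one_right (norm_nonneg _) (norm_le_one _)
  calc ‖Ring.choose z (m + 1)‖
      ≤ (m + 1 : ℕ) * ‖((m + 1 : ℕ) : ℤ_[p])‖ * ‖Ring.choose z (m + 1)‖ :=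
        le_mul_of_one_le_left (norm_nonneg _) (one_le_natCast_mul_norm_natCast hn)
    _ ≤ (m + 1 : ℕ) * ‖z‖ := by rw [mul_assoc]; gcongr

lemma norm_choose_sub_choose_le (x y : ℤ_[p]) (n : ℕ) :
    ‖Ring.choose x n - Ring.choose y n‖ ≤ n * ‖x - y‖ := by
  have hsplit : Ring.choose x n - Ring.choose y n =
      ∑ k ∈ range n, Ring.choose (x - y) (k + 1) * Ring.choose y (n - (k + 1)) := by
    rw [← sub_add_cancel x y, Ring.add_choose_eq n (Commute.all _ _),
      Nat.sum_antidiagonal_eq_sum_range_succ_mk, sum_range_succ']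
    simp
  rw [hsplit]
  refine IsUltrametricDist.norm_sum_le_of_forall_le_of_nonneg (by positivity) fun k hk => ?_
  have hkn : ((k + 1 : ℕ) : ℝ) ≤ n := by exact_mod_cast mem_range.mp hk
  calc ‖Ring.choose (x - y) (k + 1) * Ring.choose y (n - (k + 1))‖
      ≤ ‖Ring.choose (x - y) (k + 1)‖ := by
        rw [norm_mul]; exact mul_le_of_le_one_right (norm_nonneg _) (norm_le_one _)
    _ ≤ (k + 1 : ℕ) * ‖x - y‖ := norm_choose_le _ k.succ_ne_zero
    _ ≤ n * ‖x - y‖ := by gcongr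

lemma norm_descPochhammer_smeval_le (n : ℕ) (x : ℤ_[p]) :
    ‖(descPochhammer ℤ n).smeval x‖ ≤ ‖(n.factorial : ℤ_[p])‖ := by
  rw [Ring.descPochhammer_eq_factorial_smul_choose, nsmul_eq_mul, norm_mul]
  exact mul_le_of_le_one_right (norm_nonneg _) (norm_le_one _)

lemma norm_factorial_prime_pow_le (k : ℕ) :
    ‖((p ^ k).factorial : ℤ_[p])‖ ≤ ‖(p : ℤ_[p])‖ ^ k := by
  obtain ⟨c, hc⟩ := Nat.dvd_factorial (pow_pos (Fact.out : p.Prime).pos k) le_rfl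
  rw [hc, Nat.cast_mul, norm_mul, Nat.cast_pow, norm_pow]
  exact mul_le_of_le_one_right (by positivity) (norm_le_one _)

end PadicInt

section

variable (p : ℕ) [Fact p.Prime] (K : Type*) [NontriviallyNormedField K] [NormedAlgebra ℚ_[p] K]

noncomputable def pcHom : ℤ_[p] →+* K :=
  (algebraMap ℚ_[p] K).comp PadicInt.Coe.ringHom

lemma pcHom_apply (x : ℤ_[p]) : pcHom p K x = pc p K x := rfl

variable {p K}

lemma norm_pc (x : ℤ_[p]) : ‖pc p K x‖ = ‖x‖ := by
  rw [pc, norm_algebraMap', PadicInt.padic_norm_e_of_padicInt]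

lemma pc_add_sub_pc (x t : ℤ_[p]) : pc p K (x + t) - pc p K x = pc p K t := by
  simp only [← pcHom_apply, ← map_sub, add_sub_cancel_left]

lemma bK_eq_pc_choose (n : ℕ) (x : ℤ_[p]) : bK p K n x = pc p K (Ring.choose x n) := by
  have hfac : (n.factorial : K) ≠ 0 := by
    rw [← map_natCast (algebraMap ℚ_[p] K)]
    exact (map_ne_zero _).mpr (Nat.cast_ne_zero.mpr n.factorial_ne_zero)
  have hprod : ∏ i ∈ range n, (pc p K x - (i : K)) = pcHom p K (∏ i ∈ range n, (x - i)) := by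
    rw [map_prod]
    exact prod_congr rfl fun i _ => by rw [map_sub, map_natCast, pcHom_apply]
  rw [bK, hprod, ← descPochhammer_smeval_eq_prod_range,
    Ring.descPochhammer_eq_factorial_smul_choose, nsmul_eq_mul, map_mul, map_natCast, pcHom_apply,
    mul_div_cancel_left₀ _ hfac]

lemma norm_bK_le_one (n : ℕ) (x : ℤ_[p]) : ‖bK p K n x‖ ≤ 1 := by
  rw [bK_eq_pc_choose, norm_pc]
  exact PadicInt.norm_le_one _

lemma norm_bK_sub_bK_le (n : ℕ) (x y : ℤ_[p]) :
    ‖bK p K n x - bK p K n y‖ ≤ n * ‖x - y‖ := by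
  rw [bK_eq_pc_choose, bK_eq_pc_choose, ← pcHom_apply, ← pcHom_apply, ← map_sub, pcHom_apply,
    norm_pc]
  exact PadicInt.norm_choose_sub_choose_le x y n

lemma summable_pow_mul_bK [CompleteSpace K] {r : K} (hr : ‖r - 1‖ < 1) (x : ℤ_[p]) :
    Summable fun n : ℕ => (r - 1) ^ n * bK p K n x := by
  refine Summable.of_norm_bounded (summable_geometric_of_lt_one (norm_nonneg _) hr) fun n => ?_
  rw [norm_mul, norm_pow]
  exact mul_le_of_le_one_right (by positivity) (norm_bK_le_one n x)

lemma norm_tsum_pow_mul_bK_le_one {r : K} (hr : ‖r - 1‖ ≤ 1) (x : ℤ_[p]) :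
    ‖∑' n : ℕ, (r - 1) ^ n * bK p K n x‖ ≤ 1 := by
  have := IsUltrametricDist.of_normedAlgebra ℚ_[p] (L := K)
  refine IsUltrametricDist.norm_tsum_le_of_forall_le_of_nonneg zero_le_one fun n => ?_
  rw [norm_mul, norm_pow]
  exact mul_le_one₀ (pow_le_one₀ (norm_nonneg _) hr) (norm_nonneg _) (norm_bK_le_one n x)

lemma lipschitzWith_one_tsum_pow_mul_bK [CompleteSpace K] {r : K} (hr : ‖r - 1‖ ^ 3 ≤ 1 / 3) :
    LipschitzWith 1 fun x : ℤ_[p] => ∑' n : ℕ, (r - 1) ^ n * bK p K n x := by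
  have := IsUltrametricDist.of_normedAlgebra ℚ_[p] (L := K)
  have hr1 : ‖r - 1‖ < 1 :=
    (pow_lt_one_iff_of_nonneg (norm_nonneg _) three_ne_zero).mp (hr.trans_lt (by norm_num))
  refine LipschitzWith.of_dist_le_mul fun x y => ?_
  rw [NNReal.coe_one, one_mul, dist_eq_norm, dist_eq_norm,
    ← (summable_pow_mul_bK hr1 x).tsum_sub (summable_pow_mul_bK hr1 y)]
  refine IsUltrametricDist.norm_tsum_le_of_forall_le_of_nonneg (norm_nonneg _) fun n => ?_
  calc ‖(r - 1) ^ n * bK p K n x - (r - 1) ^ n * bK p K n y‖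
      = ‖r - 1‖ ^ n * ‖bK p K n x - bK p K n y‖ := by rw [← mul_sub, norm_mul, norm_pow]
    _ ≤ ‖r - 1‖ ^ n * (n * ‖x - y‖) := by gcongr; exact norm_bK_sub_bK_le n x y
    _ = (n * ‖r - 1‖ ^ n) * ‖x - y‖ := by ring
    _ ≤ ‖x - y‖ :=
      mul_le_of_le_one_left (norm_nonneg _) (natCast_mul_pow_le_one (norm_nonneg _) hr n)

lemma norm_le_max_of_norm_Sop_le {f : ℤ_[p] → K} {M C : ℝ} (hC : 0 ≤ C) (hM : ∀ x, ‖f x‖ ≤ M)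
    (hS : ∀ x, ‖Sop p K f x‖ ≤ C) (n : ℕ) (x : ℤ_[p]) :
    ‖f x‖ ≤ max C (‖(descPochhammer ℤ n).smeval x‖ * M) := by
  have := IsUltrametricDist.of_normedAlgebra ℚ_[p] (L := K)
  induction n generalizing x with
  | zero => simpa using le_max_of_le_right (hM x)
  | succ n ih =>
    have hstep : ‖f x‖ ≤ max C (‖x‖ * ‖f (x - 1)‖) := by
      rw [← sub_add_cancel (f x) (pc p K x * f (x - 1)), ← norm_pc (K := K), ← norm_mul]
      exact (IsUltrametricDist.norm_add_le_max _ _).trans (max_le_max_right _ (hS x))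
    refine hstep.trans (max_le (le_max_left _ _) ?_)
    calc ‖x‖ * ‖f (x - 1)‖
        ≤ ‖x‖ * max C (‖(descPochhammer ℤ n).smeval (x - 1)‖ * M) := by gcongr; exact ih _
      _ = max (‖x‖ * C) (‖(descPochhammer ℤ (n + 1)).smeval x‖ * M) := by
        rw [mul_max_of_nonneg _ _ (norm_nonneg _), descPochhammer_smeval_succ, norm_mul, mul_assoc]
      _ ≤ max C (‖(descPochhammer ℤ (n + 1)).smeval x‖ * M) :=
        max_le_max_right _ (mul_le_of_le_one_left hC (PadicInt.norm_le_one x))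

lemma norm_le_of_norm_Sop_le {f : ℤ_[p] → K} {M C : ℝ} (hC : 0 ≤ C) (hM : ∀ x, ‖f x‖ ≤ M)
    (hS : ∀ x, ‖Sop p K f x‖ ≤ C) (x : ℤ_[p]) : ‖f x‖ ≤ C := by
  have hM0 : 0 ≤ M := (norm_nonneg _).trans (hM x)
  have hp : ‖(p : ℤ_[p])‖ < 1 := by
    rw [PadicInt.norm_p]
    exact inv_lt_one_of_one_lt₀ (by exact_mod_cast (Fact.out : p.Prime).one_lt)
  have hlim : Tendsto (fun k : ℕ => max C (‖(p : ℤ_[p])‖ ^ k * M)) atTop (nhds (max C (0 * M))) :=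
    tendsto_const_nhds.max ((tendsto_pow_atTop_nhds_zero_of_lt_one (norm_nonneg _) hp).mul_const M)
  rw [zero_mul, max_eq_left hC] at hlim
  refine ge_of_tendsto' hlim fun k => (norm_le_max_of_norm_Sop_le hC hM hS (p ^ k) x).trans ?_
  gcongr
  exact (PadicInt.norm_descPochhammer_smeval_le _ x).trans (PadicInt.norm_factorial_prime_pow_le k)

lemma Sop_sub_comp_add (f : ℤ_[p] → K) (t z : ℤ_[p]) :
    Sop p K (fun z => f (z + t) - f z) z =
      Sop p K f (z + t) - Sop p K f z + pc p K t * f (z + t - 1) := by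
  simp only [Sop]
  rw [← pc_add_sub_pc z t, show z - 1 + t = z + t - 1 by ring]
  ring

lemma lipschitzWith_one_of_lipschitzWith_one_Sop {f : ℤ_[p] → K} (hf : ∀ x, ‖f x‖ ≤ 1)
    (hS : LipschitzWith 1 (Sop p K f)) : LipschitzWith 1 f := by
  have := IsUltrametricDist.of_normedAlgebra ℚ_[p] (L := K)
  refine LipschitzWith.of_dist_le_mul fun x y => ?_
  rw [NNReal.coe_one, one_mul, dist_eq_norm, dist_eq_norm]
  have hdiff : ∀ z, ‖f (z + (x - y)) - f z‖ ≤ 2 := fun z =>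
    (norm_sub_le _ _).trans (by linarith [hf (z + (x - y)), hf z])
  have hSdiff : ∀ z, ‖Sop p K (fun z => f (z + (x - y)) - f z) z‖ ≤ ‖x - y‖ := fun z => by
    rw [Sop_sub_comp_add]
    refine (IsUltrametricDist.norm_add_le_max _ _).trans (max_le ?_ ?_)
    · simpa [dist_eq_norm] using hS.dist_le_mul (z + (x - y)) z
    · rw [norm_mul, norm_pc]
      exact mul_le_of_le_one_right (norm_nonneg _) (hf _)
  simpa using norm_le_of_norm_Sop_le (norm_nonneg _) hdiff hSdiff y

end

/-- If `r ∈ K` with `‖r - 1‖ ≤ (1/3)^{1/3}`, then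
`g_r : x ↦ r^x = Σₙ (r-1)ⁿ C(x,n)` is `1`-Lipschitz; in particular so is
`f_r = S⁻¹ g_r`. -/
theorem stmt_12 (p : ℕ) [Fact p.Prime] (K : Type*) [NontriviallyNormedField K]
    [NormedAlgebra ℚ_[p] K] [CompleteSpace K]
    (r : K) (hr : ‖r - 1‖ ≤ ((1 : ℝ) / 3) ^ ((1 : ℝ) / 3)) :
    LipschitzWith 1 (fun x : ℤ_[p] => ∑' n : ℕ, (r - 1) ^ n * bK p K n x) ∧
    (∀ f : ℤ_[p] → K, Continuous f →
      Sop p K f = (fun x : ℤ_[p] => ∑' n : ℕ, (r - 1) ^ n * bK p K n x) →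
      LipschitzWith 1 f) := by
  have hr3 : ‖r - 1‖ ^ 3 ≤ 1 / 3 := by
    calc ‖r - 1‖ ^ 3 ≤ (((1 : ℝ) / 3) ^ ((1 : ℝ) / 3)) ^ 3 := by gcongr
      _ = 1 / 3 := by rw [← Real.rpow_natCast, ← Real.rpow_mul (by norm_num)]; norm_num
  have hg := lipschitzWith_one_tsum_pow_mul_bK (p := p) hr3
  refine ⟨hg, fun f hf hSf => ?_⟩
  obtain ⟨M, hM⟩ := (isCompact_range hf).isBounded.exists_norm_le
  have hr1 : ‖r - 1‖ ≤ 1 := hr.trans (Real.rpow_le_one (by norm_num) (by norm_num) (by norm_num))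
  have hf1 : ∀ x, ‖f x‖ ≤ 1 := norm_le_of_norm_Sop_le zero_le_one (fun x => hM _ ⟨x, rfl⟩)
    fun x => hSf ▸ norm_tsum_pow_mul_bK_le_one hr1 x
  exact lipschitzWith_one_of_lipschitzWith_one_Sop hf1 (hSf ▸ hg)
end

section
/- The pairing ⟨φ, ψ⟩ = Σ_{n=0}^∞ (−1)ⁿ Σ_{k=0}^n C(n,k) aₖ bₙ₋ₖ (where (aₖ), (bₗ) are the Mahler coefficients of φ, ψ) converges, is a symmetric ℂₚ-bilinear form on C(ℤₚ, ℂₚ), and is non-degenerate. -/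
open Filter Finset

/-- The term of the pairing: `(-1)ⁿ Σ_{k=0}^n C(n,k) aₖ bₙ₋ₖ`. -/
def pairTerm (K : Type*) [NontriviallyNormedField K] (a b : ℕ → K) (n : ℕ) : K :=
  (-1) ^ n * ∑ k ∈ Finset.range (n + 1), (n.choose k : K) * a k * b (n - k)

/-- The pairing `⟨φ, ψ⟩ = Σₙ (-1)ⁿ Σ_{k=0}^n C(n,k) aₖ bₙ₋ₖ` on Mahler
coefficient sequences. -/
noncomputable def pairing (K : Type*) [NontriviallyNormedField K] (a b : ℕ → K) : K :=
  ∑' n : ℕ, pairTerm K a b n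

section Pairing

variable {K : Type*} [NontriviallyNormedField K]

theorem pairTerm_comm (a b : ℕ → K) : pairTerm K a b = pairTerm K b a := by
  ext n
  rw [pairTerm, pairTerm, ← sum_range_reflect]
  congr 1
  refine sum_congr rfl fun k hk => ?_
  have hkn : k ≤ n := Nat.lt_succ_iff.mp (mem_range.mp hk)
  rw [Nat.add_sub_cancel, Nat.choose_symm hkn, Nat.sub_sub_self hkn]
  ring

theorem pairing_comm (a b : ℕ → K) : pairing K a b = pairing K b a := by
  rw [pairing, pairTerm_comm]
  rfl

theorem pairTerm_mul_add_left (c : K) (a a' b : ℕ → K) (n : ℕ) :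
    pairTerm K (fun k => c * a k + a' k) b n = c * pairTerm K a b n + pairTerm K a' b n := by
  simp only [pairTerm, mul_sum, ← sum_add_distrib]
  exact sum_congr rfl fun _ _ => by ring

theorem pairTerm_single_left (m : ℕ) (b : ℕ → K) (n : ℕ) :
    pairTerm K (Pi.single m 1) b n =
      if m ≤ n then (-1) ^ n * (n.choose m : K) * b (n - m) else 0 := by
  simp only [pairTerm, Pi.single_apply, mul_ite, ite_mul, mul_one, mul_zero, zero_mul,
    sum_ite_eq', mem_range, Nat.lt_succ_iff]
  split_ifs <;> ring

theorem pairing_single_left (m : ℕ) (b : ℕ → K) :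
    pairing K (Pi.single m 1) b = ∑' j, (-1) ^ (m + j) * ((m + j).choose m : K) * b j := by
  have hsupp : Function.support (pairTerm K (Pi.single m 1) b) ⊆ Set.range (m + ·) := by
    intro n hn
    refine ⟨n - m, Nat.add_sub_cancel' ?_⟩
    by_contra hmn
    exact hn (by rw [pairTerm_single_left, if_neg hmn])
  rw [pairing, ← (add_right_injective m).tsum_eq hsupp]
  simp [pairTerm_single_left]

variable [IsUltrametricDist K]

theorem tendsto_pairTerm_zero {a b : ℕ → K} (ha : Tendsto a atTop (nhds 0))
    (hb : Tendsto b atTop (nhds 0)) : Tendsto (pairTerm K a b) atTop (nhds 0) := by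
  obtain ⟨C, hC, hCa, hCb⟩ : ∃ C > 0, (∀ k, ‖a k‖ ≤ C) ∧ ∀ k, ‖b k‖ ≤ C := by
    obtain ⟨Ca, hCa⟩ := ha.norm.bddAbove_range
    obtain ⟨Cb, hCb⟩ := hb.norm.bddAbove_range
    refine ⟨max 1 (max Ca Cb), by positivity, fun k => ?_, fun k => ?_⟩
    · exact (hCa ⟨k, rfl⟩).trans (le_max_of_le_right (le_max_left _ _))
    · exact (hCb ⟨k, rfl⟩).trans (le_max_of_le_right (le_max_right _ _))
  refine NormedAddGroup.tendsto_nhds_zero.2 fun ε hε => ?_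
  have hεC : 0 < ε / C := by positivity
  obtain ⟨N, hN⟩ := eventually_atTop.1 ((NormedAddGroup.tendsto_nhds_zero.1 ha _ hεC).and
    (NormedAddGroup.tendsto_nhds_zero.1 hb _ hεC))
  -- one of the two indices of each term of `pairTerm K a b n` is at least `N` once `n ≥ 2N`
  have hsmall : ∀ k l, N ≤ k ∨ N ≤ l → ‖a k * b l‖ < ε := by
    rintro k l (hk | hl)
    · calc ‖a k * b l‖ = ‖a k‖ * ‖b l‖ := norm_mul _ _
        _ < ε / C * C := mul_lt_mul_of_lt_of_le_of_nonneg_of_pos (hN k hk).1 (hCb l)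
            (norm_nonneg _) hC
        _ = ε := div_mul_cancel₀ _ hC.ne'
    · calc ‖a k * b l‖ = ‖b l‖ * ‖a k‖ := by rw [norm_mul, mul_comm]
        _ < ε / C * C := mul_lt_mul_of_lt_of_le_of_nonneg_of_pos (hN l hl).2 (hCa k)
            (norm_nonneg _) hC
        _ = ε := div_mul_cancel₀ _ hC.ne'
  filter_upwards [eventually_ge_atTop (2 * N)] with n hn
  obtain ⟨k, hk, hle⟩ := IsUltrametricDist.exists_norm_finsetSum_le_of_nonempty
    nonempty_range_add_one (fun k => (n.choose k : K) * a k * b (n - k))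
  rw [pairTerm, norm_mul, norm_pow, norm_neg, norm_one, one_pow, one_mul]
  calc _ ≤ ‖(n.choose k : K) * a k * b (n - k)‖ := hle
    _ ≤ ‖a k * b (n - k)‖ := by
        rw [mul_assoc, norm_mul]
        exact mul_le_of_le_one_left (norm_nonneg _) (IsUltrametricDist.norm_natCast_le_one K _)
    _ < ε := hsmall k (n - k) (by omega)

theorem summable_pairTerm [CompleteSpace K] {a b : ℕ → K} (ha : Tendsto a atTop (nhds 0))
    (hb : Tendsto b atTop (nhds 0)) : Summable (pairTerm K a b) :=
  NonarchimedeanAddGroup.summable_of_tendsto_cofinite_zero <| by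
    rw [Nat.cofinite_eq_atTop]
    exact tendsto_pairTerm_zero ha hb

theorem pairing_mul_add_left [CompleteSpace K] (c : K) {a a' b : ℕ → K}
    (ha : Tendsto a atTop (nhds 0)) (ha' : Tendsto a' atTop (nhds 0))
    (hb : Tendsto b atTop (nhds 0)) :
    pairing K (fun n => c * a n + a' n) b = c * pairing K a b + pairing K a' b := by
  simp only [pairing, pairTerm_mul_add_left]
  rw [((summable_pairTerm ha hb).mul_left c).tsum_add (summable_pairTerm ha' hb), tsum_mul_left]

end Pairing

theorem Ring.choose_neg_natCast_add_one {R : Type*} [CommRing R] [BinomialRing R] (m j : ℕ) :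
    Ring.choose (-(m + 1 : R)) j = (-1) ^ j * ((m + j).choose j : R) := by
  have hsum : (m + 1 + j - 1 : R) = ((m + j : ℕ) : R) := by push_cast; ring
  rw [Ring.choose_neg, hsum, Ring.choose_natCast, Units.smul_def, zsmul_eq_mul]
  simp [Int.coe_negOnePow_natCast]

section Mahler

open PadicInt

variable {K : Type*} [NontriviallyNormedField K] [IsUltrametricDist K] [CompleteSpace K]

theorem mahlerSeries_neg_natCast_add_one (p : ℕ) [Fact p.Prime] [Module ℤ_[p] K]
    [IsBoundedSMul ℤ_[p] K] {b : ℕ → K} (hb : Tendsto b atTop (nhds 0)) (m : ℕ) :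
    mahlerSeries (p := p) b (-(m + 1)) = ∑' j, (-1) ^ j * ((m + j).choose j : K) * b j := by
  rw [mahlerSeries_apply hb]
  refine tsum_congr fun j => ?_
  have hcast : (-1) ^ j * ((m + j).choose j : ℤ_[p]) =
      (((-1) ^ j * (m + j).choose j : ℤ) : ℤ_[p]) := by
    push_cast; rfl
  rw [mahler_apply, Ring.choose_neg_natCast_add_one, hcast, Int.cast_smul_eq_zsmul, zsmul_eq_mul]
  push_cast
  rfl

theorem pairing_single_left_eq_mahlerSeries (p : ℕ) [Fact p.Prime] [Module ℤ_[p] K]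
    [IsBoundedSMul ℤ_[p] K] {b : ℕ → K} (hb : Tendsto b atTop (nhds 0)) (m : ℕ) :
    pairing K (Pi.single m 1) b = (-1) ^ m * mahlerSeries (p := p) b (-(m + 1)) := by
  rw [pairing_single_left, mahlerSeries_neg_natCast_add_one p hb, ← tsum_mul_left]
  refine tsum_congr fun j => ?_
  rw [Nat.choose_symm_add, pow_add]
  ring

theorem eq_zero_of_forall_pairing_eq_zero (p : ℕ) [Fact p.Prime] [Module ℤ_[p] K]
    [IsBoundedSMul ℤ_[p] K] {b : ℕ → K} (hb : Tendsto b atTop (nhds 0))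
    (h : ∀ a : ℕ → K, Tendsto a atTop (nhds 0) → pairing K a b = 0) : b = 0 := by
  have hdense : DenseRange fun m : ℕ => -(m + 1 : ℤ_[p]) :=
    (Homeomorph.neg ℤ_[p]).surjective.denseRange.comp
      ((Homeomorph.addRight (1 : ℤ_[p])).surjective.denseRange.comp denseRange_natCast
        (Homeomorph.addRight _).continuous) (Homeomorph.neg _).continuous
  have hψ : ⇑(mahlerSeries (p := p) b) = 0 := by
    refine hdense.equalizer (map_continuous _) continuous_const (funext fun m => ?_)
    have hsingle : Tendsto (Pi.single m (1 : K)) atTop (nhds 0) :=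
      tendsto_const_nhds.congr' <| (eventually_gt_atTop m).mono fun n hn => by
        simp [hn.ne']
    have hm := pairing_single_left_eq_mahlerSeries p hb m
    rw [h _ hsingle] at hm
    simpa using hm
  funext n
  rw [← fwdDiff_mahlerSeries (p := p) hb n, hψ]
  simp [fwdDiff_iter_eq_sum_shift]

end Mahler

/-- The pairing `⟨φ, ψ⟩ = Σₙ (-1)ⁿ Σ_{k=0}^n C(n,k) aₖ bₙ₋ₖ`
(on Mahler coefficients, i.e. on null sequences `a`, `b`) converges, is a
symmetric `K`-bilinear form, and is non-degenerate. -/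
theorem stmt_15 (p : ℕ) [Fact p.Prime] (K : Type*) [NontriviallyNormedField K]
    [NormedAlgebra ℚ_[p] K] [CompleteSpace K] :
    (∀ a b : ℕ → K, Tendsto a atTop (nhds 0) → Tendsto b atTop (nhds 0) →
      Summable (pairTerm K a b)) ∧
    (∀ a b : ℕ → K, Tendsto a atTop (nhds 0) → Tendsto b atTop (nhds 0) →
      pairing K a b = pairing K b a) ∧
    (∀ a a' b : ℕ → K, Tendsto a atTop (nhds 0) → Tendsto a' atTop (nhds 0) →
      Tendsto b atTop (nhds 0) → ∀ c : K,
      pairing K (fun n => c * a n + a' n) b = c * pairing K a b + pairing K a' b) ∧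
    (∀ b : ℕ → K, Tendsto b atTop (nhds 0) →
      (∀ a : ℕ → K, Tendsto a atTop (nhds 0) → pairing K a b = 0) → b = 0) := by
  have : IsUltrametricDist K := IsUltrametricDist.of_normedAlgebra ℚ_[p]
  let : Module ℤ_[p] K := Module.compHom K (algebraMap ℤ_[p] ℚ_[p])
  have : IsBoundedSMul ℤ_[p] K := IsBoundedSMul.of_norm_smul_le fun r x =>
    (norm_smul (r : ℚ_[p]) x).le
  exact ⟨fun _ _ => summable_pairTerm, fun a b _ _ => pairing_comm a b,
    fun _ _ _ ha ha' hb c => pairing_mul_add_left c ha ha' hb,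
    fun _ => eq_zero_of_forall_pairing_eq_zero p⟩
end

section
/- Define the convolution φ ⋆ ψ = Σₙ (Σ_{k=0}^n C(n,k) aₖ bₙ₋ₖ) βₙ on C(ℤₚ, ℂₚ), where (aₖ), (bₗ) are the Mahler coefficients of φ, ψ. Then ⋆ is well-defined (the binomial convolution of null sequences is null), makes C(ℤₚ, ℂₚ) a commutative ℂₚ-algebra with identity the constant function 𝟙, and satisfies S(φ) ⋆ ψ = φ ⋆ S(ψ) for all φ, ψ. -/
open Filter Finset

/-- Binomial convolution of Mahler coefficient sequences:
`(a ⋆ b)ₙ = Σ_{k=0}^n C(n,k) aₖ bₙ₋ₖ`. -/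
def conv (K : Type*) [NontriviallyNormedField K] (a b : ℕ → K) (n : ℕ) : K :=
  ∑ k ∈ Finset.range (n + 1), (n.choose k : K) * a k * b (n - k)

/-- The Mahler coefficients of `S φ` in terms of those of `φ`:
`aₙ ↦ aₙ - n·aₙ₋₁` (with `a₋₁ = 0`). -/
def Scoeff (K : Type*) [NontriviallyNormedField K] (a : ℕ → K) (n : ℕ) : K :=
  a n - (n : K) * (if n = 0 then 0 else a (n - 1))

/-!
Send a sequence `a` to its exponential generating function `Σ aₙ Xⁿ / n!`. In characteristic
zero this is injective, turns the binomial convolution into the product of power series, the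
sequence `(1, 0, 0, …)` into `1`, and `aₙ ↦ aₙ - n aₙ₋₁` into multiplication by `1 - X`; so
commutativity, associativity, the unit law and `S a ⋆ b = a ⋆ S b` are inherited from the
commutative ring `K⟦X⟧`. Nullness of `a ⋆ b` comes from the ultrametric inequality together
with `‖C(n, k)‖ ≤ 1`: the `n`-th term is bounded by some `‖aₖ‖ ‖bₙ₋ₖ‖`, and for large `n`
one of the two indices is large.
-/

open PowerSeries

open scoped Topology

namespace Conv

variable {K : Type*} [NontriviallyNormedField K]

theorem conv_add_left (a a' b : ℕ → K) :
    conv K (fun n => a n + a' n) b = fun n => conv K a b n + conv K a' b n := by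
  funext n
  simp only [conv, ← sum_add_distrib]
  exact sum_congr rfl fun _ _ => by ring

theorem conv_mul_left (a b : ℕ → K) (c : K) :
    conv K (fun n => c * a n) b = fun n => c * conv K a b n := by
  funext n
  simp only [conv, mul_sum]
  exact sum_congr rfl fun _ _ => by ring

theorem exists_norm_conv_le [IsUltrametricDist K] (a b : ℕ → K) (n : ℕ) :
    ∃ k ≤ n, ‖conv K a b n‖ ≤ ‖a k‖ * ‖b (n - k)‖ := by
  obtain ⟨k, hk, hle⟩ := IsUltrametricDist.exists_norm_finsetSum_le_of_nonempty
    nonempty_range_add_one fun k => (n.choose k : K) * a k * b (n - k)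
  refine ⟨k, Nat.lt_succ_iff.mp (mem_range.mp hk), hle.trans ?_⟩
  rw [norm_mul, norm_mul, mul_assoc]
  exact mul_le_of_le_one_left (by positivity) (IsUltrametricDist.norm_natCast_le_one K _)

theorem tendsto_conv_zero [IsUltrametricDist K] {a b : ℕ → K}
    (ha : Tendsto a atTop (𝓝 0)) (hb : Tendsto b atTop (𝓝 0)) :
    Tendsto (conv K a b) atTop (𝓝 0) := by
  obtain ⟨A, hA⟩ := ha.norm.bddAbove_range
  obtain ⟨B, hB⟩ := hb.norm.bddAbove_range
  set C := max (max A B) 1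
  have hC : 0 < C := lt_max_of_lt_right one_pos
  have haC (k : ℕ) : ‖a k‖ ≤ C := (hA ⟨k, rfl⟩).trans ((le_max_left _ _).trans (le_max_left _ _))
  have hbC (k : ℕ) : ‖b k‖ ≤ C := (hB ⟨k, rfl⟩).trans ((le_max_right _ _).trans (le_max_left _ _))
  rw [NormedAddGroup.tendsto_nhds_zero] at ha hb ⊢
  intro ε hε
  obtain ⟨N₁, hN₁⟩ := eventually_atTop.mp (ha (ε / C) (div_pos hε hC))
  obtain ⟨N₂, hN₂⟩ := eventually_atTop.mp (hb (ε / C) (div_pos hε hC))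
  filter_upwards [eventually_ge_atTop (N₁ + N₂)] with n hn
  obtain ⟨k, hkn, hle⟩ := exists_norm_conv_le a b n
  refine hle.trans_lt ?_
  rcases le_or_gt N₁ k with hk | hk
  · calc ‖a k‖ * ‖b (n - k)‖ ≤ ‖a k‖ * C := by gcongr; exact hbC _
      _ < ε / C * C := by gcongr; exact hN₁ k hk
      _ = ε := div_mul_cancel₀ ε hC.ne'
  · calc ‖a k‖ * ‖b (n - k)‖ ≤ C * ‖b (n - k)‖ := by gcongr; exact haC k
      _ < C * (ε / C) := by gcongr; exact hN₂ (n - k) (by omega)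
      _ = ε := mul_div_cancel₀ ε hC.ne'

noncomputable def egf (a : ℕ → K) : K⟦X⟧ :=
  PowerSeries.mk fun n => a n / n.factorial

variable [CharZero K]

theorem egf_injective : Function.Injective (egf (K := K)) := by
  intro a b h
  funext n
  have hn := congrArg (coeff n) h
  simp only [egf, coeff_mk] at hn
  exact (div_left_inj' (Nat.cast_ne_zero.mpr n.factorial_ne_zero)).mp hn

theorem egf_conv (a b : ℕ → K) : egf (conv K a b) = egf a * egf b := by
  ext n
  rw [coeff_mul, Nat.sum_antidiagonal_eq_sum_range_succ_mk]
  simp only [egf, coeff_mk, conv, sum_div]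
  refine sum_congr rfl fun k hk => ?_
  have hkn : k ≤ n := Nat.lt_succ_iff.mp (mem_range.mp hk)
  rw [Nat.cast_choose K hkn]
  have := Nat.factorial_ne_zero k
  have := Nat.factorial_ne_zero (n - k)
  have := Nat.factorial_ne_zero n
  field_simp

theorem egf_single_zero : egf (fun n => if n = 0 then (1 : K) else 0) = 1 := by
  ext n
  rcases eq_or_ne n 0 with rfl | hn <;> simp [egf, coeff_one, *]

theorem egf_Scoeff (a : ℕ → K) : egf (Scoeff K a) = (1 - X) * egf a := by
  ext n
  rw [sub_mul, one_mul, map_sub]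
  cases n with
  | zero => simp [egf, Scoeff]
  | succ m =>
    rw [coeff_succ_X_mul]
    simp only [egf, coeff_mk, Scoeff, Nat.succ_ne_zero, reduceIte, Nat.add_sub_cancel,
      Nat.factorial_succ, Nat.cast_mul]
    have := Nat.factorial_ne_zero m
    field_simp

theorem conv_comm (a b : ℕ → K) : conv K a b = conv K b a :=
  egf_injective <| by rw [egf_conv, egf_conv, mul_comm]

theorem conv_assoc (a b c : ℕ → K) : conv K (conv K a b) c = conv K a (conv K b c) :=
  egf_injective <| by simp only [egf_conv, mul_assoc]

theorem conv_single_zero (a : ℕ → K) : conv K a (fun n => if n = 0 then 1 else 0) = a :=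
  egf_injective <| by rw [egf_conv, egf_single_zero, mul_one]

theorem conv_Scoeff_left (a b : ℕ → K) : conv K (Scoeff K a) b = conv K a (Scoeff K b) :=
  egf_injective <| by rw [egf_conv, egf_conv, egf_Scoeff, egf_Scoeff, mul_assoc, mul_left_comm]

end Conv

open Conv in
theorem stmt_17_general (p : ℕ) [Fact p.Prime] (K : Type*) [NontriviallyNormedField K]
    [NormedAlgebra ℚ_[p] K] :
    (∀ a b : ℕ → K, Tendsto a atTop (nhds 0) → Tendsto b atTop (nhds 0) →
      Tendsto (conv K a b) atTop (nhds 0)) ∧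
    (∀ a b : ℕ → K, conv K a b = conv K b a) ∧
    (∀ a b c : ℕ → K, conv K (conv K a b) c = conv K a (conv K b c)) ∧
    (∀ a a' b : ℕ → K, conv K (fun n => a n + a' n) b
      = fun n => conv K a b n + conv K a' b n) ∧
    (∀ (a b : ℕ → K) (c : K), conv K (fun n => c * a n) b = fun n => c * conv K a b n) ∧
    (∀ a : ℕ → K, conv K a (fun n => if n = 0 then 1 else 0) = a) ∧
    (∀ a b : ℕ → K, conv K (Scoeff K a) b = conv K a (Scoeff K b)) := by
  have : CharZero K := charZero_of_injective_algebraMap (algebraMap ℚ_[p] K).injective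
  have : IsUltrametricDist K := IsUltrametricDist.of_normedAlgebra ℚ_[p]
  exact ⟨fun _ _ => tendsto_conv_zero, conv_comm, conv_assoc, conv_add_left, conv_mul_left,
    conv_single_zero, conv_Scoeff_left⟩

/-- The binomial convolution `⋆` of Mahler coefficients is
well-defined (the convolution of null sequences is null) and makes
`C(ℤ_[p], K)` a commutative `K`-algebra with identity the constant function
`𝟙` (whose Mahler coefficient sequence is `(1, 0, 0, …)`), and it satisfies
`S(φ) ⋆ ψ = φ ⋆ S(ψ)`. -/
theorem stmt_17 (p : ℕ) [Fact p.Prime] (K : Type*) [NontriviallyNormedField K]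
    [NormedAlgebra ℚ_[p] K] [CompleteSpace K] :
    (∀ a b : ℕ → K, Tendsto a atTop (nhds 0) → Tendsto b atTop (nhds 0) →
      Tendsto (conv K a b) atTop (nhds 0)) ∧
    (∀ a b : ℕ → K, conv K a b = conv K b a) ∧
    (∀ a b c : ℕ → K, conv K (conv K a b) c = conv K a (conv K b c)) ∧
    (∀ a a' b : ℕ → K, conv K (fun n => a n + a' n) b
      = fun n => conv K a b n + conv K a' b n) ∧
    (∀ (a b : ℕ → K) (c : K), conv K (fun n => c * a n) b = fun n => c * conv K a b n) ∧
    (∀ a : ℕ → K, conv K a (fun n => if n = 0 then 1 else 0) = a) ∧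
    (∀ a b : ℕ → K, conv K (Scoeff K a) b = conv K a (Scoeff K b)) :=
  stmt_17_general p K
end

section
/- For all continuous ψ : ℤₚ → ℂₚ, all m ∈ ℤ_{≥0}, and all x ∈ ℤₚ: Sᵐ(ψ)(x) = Σ_{k=0}^m (−1)ᵏ C(m,k) (x)ₖ ψ(x−k), where (x)ₖ is the falling factorial; in particular Sᵐ(ψ)(−1) = Σ_{k=0}^m (m)ₖ ψ(−1−k). -/
open Filter Finset

lemma pc_sub_one (p : ℕ) [Fact p.Prime] (K : Type*) [NontriviallyNormedField K]
    [NormedAlgebra ℚ_[p] K] (x : ℤ_[p]) : pc p K (x - 1) = pc p K x - 1 := by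
  simp [pc, map_sub, map_one]

lemma prod_step (p : ℕ) [Fact p.Prime] (K : Type*) [NontriviallyNormedField K]
    [NormedAlgebra ℚ_[p] K] (x : ℤ_[p]) (k : ℕ) :
    pc p K x * ∏ i ∈ Finset.range k, (pc p K (x - 1) - (i : K))
      = ∏ i ∈ Finset.range (k + 1), (pc p K x - (i : K)) := by
  have h : ∀ i ∈ Finset.range k, pc p K (x - 1) - (i : K)
      = pc p K x - ((i + 1 : ℕ) : K) := by
    intro i _
    rw [pc_sub_one]; push_cast; ring
  rw [Finset.prod_congr rfl h, Finset.prod_range_succ']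
  push_cast
  ring

lemma main_formula (p : ℕ) [Fact p.Prime] (K : Type*) [NontriviallyNormedField K]
    [NormedAlgebra ℚ_[p] K] (ψ : ℤ_[p] → K) (m : ℕ) :
    ∀ x : ℤ_[p], (Sop p K)^[m] ψ x
      = ∑ k ∈ Finset.range (m + 1), (-1) ^ k * (m.choose k : K)
          * (∏ i ∈ Finset.range k, (pc p K x - (i : K))) * ψ (x - (k : ℤ_[p])) := by
  induction m with
  | zero => intro x; simp
  | succ m ih =>
    intro x
    rw [Function.iterate_succ_apply']
    have hS : (Sop p K) ((Sop p K)^[m] ψ) x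
        = (Sop p K)^[m] ψ x - pc p K x * (Sop p K)^[m] ψ (x - 1) := rfl
    rw [hS, ih x, ih (x - 1)]
    have hg0 : ∑ k ∈ Finset.range (m + 1), (-1) ^ k * (m.choose k : K)
          * (∏ i ∈ Finset.range k, (pc p K x - (i : K))) * ψ (x - (k : ℤ_[p]))
        = ∑ k ∈ Finset.range (m + 2), (-1) ^ k * (m.choose k : K)
          * (∏ i ∈ Finset.range k, (pc p K x - (i : K))) * ψ (x - (k : ℤ_[p])) := by
      rw [Finset.sum_range_succ _ (m + 1)]
      simp [Nat.choose_succ_self]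
    rw [hg0, Finset.sum_range_succ' _ (m + 1), Finset.mul_sum,
      Finset.sum_range_succ' _ (m + 1)]
    rw [add_sub_right_comm, ← Finset.sum_sub_distrib]
    congr 1
    · apply Finset.sum_congr rfl
      intro k _
      have h1 := prod_step p K x k
      have h2 : x - 1 - (k : ℤ_[p]) = x - ((k : ℤ_[p]) + 1) := by ring
      rw [Nat.choose_succ_succ]
      push_cast
      rw [h2, ← h1]
      ring
    · simp

/-- For all continuous `ψ : ℤ_[p] → K`, all `m ∈ ℤ_{≥0}` and all
`x ∈ ℤ_[p]`: `Sᵐ(ψ)(x) = Σ_{k=0}^m (-1)ᵏ C(m,k) (x)ₖ ψ(x-k)`, where `(x)ₖ` is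
the falling factorial; in particular `Sᵐ(ψ)(-1) = Σ_{k=0}^m (m)ₖ ψ(-1-k)`. -/
theorem stmt_19 (p : ℕ) [Fact p.Prime] (K : Type*) [NontriviallyNormedField K]
    [NormedAlgebra ℚ_[p] K] [CompleteSpace K]
    (ψ : ℤ_[p] → K) (hψ : Continuous ψ) (m : ℕ) :
    (∀ x : ℤ_[p], (Sop p K)^[m] ψ x
      = ∑ k ∈ Finset.range (m + 1), (-1) ^ k * (m.choose k : K)
          * (∏ i ∈ Finset.range k, (pc p K x - (i : K))) * ψ (x - (k : ℤ_[p]))) ∧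
    (Sop p K)^[m] ψ (-1)
      = ∑ k ∈ Finset.range (m + 1), (m.descFactorial k : K) * ψ (-1 - (k : ℤ_[p])) := by
  refine ⟨main_formula p K ψ m, ?_⟩
  rw [main_formula p K ψ m (-1)]
  have hpc : pc p K (-1 : ℤ_[p]) = -1 := by
    simp [pc]
  have hprod : ∀ k : ℕ, ∏ i ∈ Finset.range k, (pc p K (-1 : ℤ_[p]) - (i : K))
      = (-1) ^ k * (k.factorial : K) := by
    intro k
    rw [hpc]
    induction k with
    | zero => simp
    | succ n ihn =>
      rw [Finset.prod_range_succ, ihn]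
      push_cast [Nat.factorial_succ]
      ring
  apply Finset.sum_congr rfl
  intro k _
  rw [hprod, Nat.descFactorial_eq_factorial_mul_choose]
  push_cast
  rw [show ((-1 : K)^k * (m.choose k : K)) * ((-1)^k * (k.factorial : K))
    = ((-1)^k * (-1)^k) * ((k.factorial : K) * (m.choose k)) by ring,
    ← pow_add, ← two_mul, pow_mul]
  simp [mul_assoc]
end
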